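/- arXiv:1205.0037 — 8 statements merged into one kernel-verified Lean document; each statement's English description precedes it below -/
import Mathlib

section
/- Let r be a positive integer and let s_1, ..., s_r be complex numbers with respective real parts σ_1, ..., σ_r. If for each integer k with 1 ≤ k ≤ r the inequality σ_1 + σ_2 + ... + σ_k > k holds, then the multiple zeta series ζ(s_1, ..., s_r) = ∑_{n_1 > n_2 > ... > n_r > 0} ∏_{j=1}^r n_j^{-s_j} (sum over r-tuples of positive integers with n_1 > n_2 > ... > n_r) is absolutely convergent. -/
/-!
Since only finitely many strict inequalities are involved, there is `c > 1` with
`σ₁ + ⋯ + σₖ ≥ k c` for every `k`. For `n₁ > ⋯ > n_r > 0` the weights `log nⱼ` are nonnegative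
and decreasing, so Abel summation gives `∑ σⱼ log nⱼ ≥ c ∑ log nⱼ`, that is
`‖∏ nⱼ^(-sⱼ)‖ ≤ ∏ nⱼ^(-c)`. The right-hand side is summable even over all of `ℕ^r`, being a
product of `r` convergent `p`-series.
-/

open Finset Filter Topology

theorem sum_range_mul_nonneg_of_antitoneOn {R : Type*} [Ring R] [LinearOrder R] [IsOrderedRing R]
    {n : ℕ} {f g : ℕ → R} (hf : AntitoneOn f (Set.Iio n)) (hf0 : ∀ i < n, 0 ≤ f i)
    (hg : ∀ k, 1 ≤ k → k ≤ n → 0 ≤ ∑ i ∈ range k, g i) :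
    0 ≤ ∑ i ∈ range n, f i * g i := by
  rcases Nat.eq_zero_or_pos n with rfl | hn
  · simp
  rw [show ∑ i ∈ range n, f i * g i = ∑ i ∈ range n, f i • g i from rfl, sum_range_by_parts]
  refine sub_nonneg_of_le ((sum_nonpos fun i hi => ?_).trans
    (smul_nonneg (hf0 _ (by omega)) (hg n hn le_rfl)))
  have hi := mem_range.1 hi
  exact smul_nonpos_of_nonpos_of_nonneg
    (sub_nonpos.2 (hf (by simp; omega) (by simp; omega) (by omega))) (hg _ (by omega) (by omega))

theorem sum_filter_val_lt_eq_sum_range {M : Type*} [AddCommMonoid M] {r k : ℕ} (hk : k ≤ r)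
    (f : ℕ → M) : ∑ j ∈ univ.filter (fun j : Fin r => (j : ℕ) < k), f j = ∑ i ∈ range k, f i := by
  rw [sum_filter, Fin.sum_univ_eq_sum_range (fun i => if i < k then f i else 0), ← sum_filter]
  congr 1
  ext i
  simp only [mem_filter, mem_range]
  omega

theorem Fin.sum_mul_nonneg_of_antitone {R : Type*} [Ring R] [LinearOrder R] [IsOrderedRing R]
    {r : ℕ} {f g : Fin r → R} (hf : Antitone f) (hf0 : ∀ j, 0 ≤ f j)
    (hg : ∀ k, 1 ≤ k → k ≤ r → 0 ≤ ∑ j ∈ univ.filter (fun j : Fin r => (j : ℕ) < k), g j) :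
    0 ≤ ∑ j, f j * g j := by
  obtain ⟨f, rfl⟩ := Fin.val_injective.surjective_comp_right f
  obtain ⟨g, rfl⟩ := Fin.val_injective.surjective_comp_right g
  simp only [Function.comp_apply] at hf0 hg ⊢
  rw [Fin.sum_univ_eq_sum_range (fun i => f i * g i)]
  refine sum_range_mul_nonneg_of_antitoneOn (fun i hi j hj hij => ?_) (fun i hi => hf0 ⟨i, hi⟩)
    fun k hk hkr => sum_filter_val_lt_eq_sum_range hkr g ▸ hg k hk hkr
  exact hf (show (⟨i, hi⟩ : Fin r) ≤ ⟨j, hj⟩ from hij)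

theorem prod_rpow_neg_le_prod_rpow_neg_of_antitone {r : ℕ} {x σ : Fin r → ℝ} {c : ℝ}
    (hx : Antitone x) (hx1 : ∀ j, 1 ≤ x j)
    (hσ : ∀ k : ℕ, 1 ≤ k → k ≤ r →
      k * c ≤ ∑ j ∈ univ.filter (fun j : Fin r => (j : ℕ) < k), σ j) :
    ∏ j, x j ^ (-σ j) ≤ ∏ j, x j ^ (-c) := by
  have hx0 (j : Fin r) : 0 < x j := one_pos.trans_le (hx1 j)
  have hlog : 0 ≤ ∑ j, Real.log (x j) * (σ j - c) := by
    refine Fin.sum_mul_nonneg_of_antitone (fun i j hij => Real.log_le_log (hx0 j) (hx hij))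
      (fun j => Real.log_nonneg (hx1 j)) fun k hk hkr => ?_
    rw [sum_sub_distrib, sum_const, Fin.card_filter_val_lt, min_eq_right hkr, nsmul_eq_mul]
    linarith [hσ k hk hkr]
  simp only [Real.rpow_def_of_pos (hx0 _), ← Real.exp_sum]
  refine Real.exp_le_exp.2 (sub_nonneg.1 ?_)
  simpa only [← sum_sub_distrib, mul_sub, mul_neg, sub_neg_eq_add, neg_add_eq_sub] using hlog

theorem summable_fin_prod_of_nonneg {β : Type*} {f : β → ℝ} (hf : Summable f) (hf0 : 0 ≤ f) :
    ∀ r : ℕ, Summable (fun x : Fin r → β => ∏ j, f (x j))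
  | 0 => Summable.of_finite
  | r + 1 => by
    refine (Fin.consEquiv fun _ => β).summable_iff.1 ?_
    simpa [Function.comp_def, Fin.consEquiv, Fin.prod_univ_succ] using
      hf.mul_of_nonneg (summable_fin_prod_of_nonneg hf hf0 r) hf0
        fun x => prod_nonneg fun j _ => hf0 (x j)

theorem exists_one_lt_forall_mul_lt {r : ℕ} {S : ℕ → ℝ}
    (h : ∀ k : ℕ, 1 ≤ k → k ≤ r → (k : ℝ) < S k) :
    ∃ c > 1, ∀ k : ℕ, 1 ≤ k → k ≤ r → k * c < S k := by
  have hnear : ∀ᶠ c in 𝓝 (1 : ℝ), ∀ k ∈ Icc 1 r, k * c < S k := by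
    refine (eventually_all_finset _).2 fun k hk => ?_
    obtain ⟨hk1, hkr⟩ := mem_Icc.1 hk
    exact ((continuous_const_mul (k : ℝ)).tendsto' 1 k (mul_one _)).eventually_lt_const
      (h k hk1 hkr)
  obtain ⟨c, hc, hc1⟩ := ((hnear.filter_mono nhdsWithin_le_nhds).and self_mem_nhdsWithin).exists
    (f := 𝓝[>] (1 : ℝ))
  exact ⟨c, hc1, fun k hk hkr => hc k (mem_Icc.2 ⟨hk, hkr⟩)⟩

theorem mzv_absolutely_convergent_general (r : ℕ) (s : Fin r → ℂ)
    (h : ∀ k : ℕ, 1 ≤ k → k ≤ r →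
      (k : ℝ) < ∑ j ∈ Finset.univ.filter (fun j : Fin r => (j : ℕ) < k), (s j).re) :
    Summable (fun n : {n : Fin r → ℕ // (∀ j, 0 < n j) ∧ ∀ i j : Fin r, i < j → n j < n i} =>
      ‖∏ j, (n.1 j : ℂ) ^ (-(s j))‖) := by
  obtain ⟨c, hc1, hc⟩ := exists_one_lt_forall_mul_lt h
  have hdom := (summable_fin_prod_of_nonneg (Real.summable_nat_rpow.2 (neg_lt_neg hc1))
    (fun n => Real.rpow_nonneg n.cast_nonneg _) r).subtype
    {n | (∀ j, 0 < n j) ∧ ∀ i j : Fin r, i < j → n j < n i}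
  refine Summable.of_nonneg_of_le (fun _ => norm_nonneg _) (fun ⟨n, hpos, hdec⟩ => ?_) hdom
  rw [norm_prod]
  simp only [Complex.norm_natCast_cpow_of_pos (hpos _), Complex.neg_re]
  exact prod_rpow_neg_le_prod_rpow_neg_of_antitone
    (fun i j hij => Nat.cast_le.2 ((StrictAnti.antitone hdec) hij))
    (fun j => Nat.one_le_cast.2 (hpos j)) fun k hk hkr => (hc k hk hkr).le

/-- **Absolute convergence criterion for multiple zeta series.**
If `r ≥ 1` and `s_1, …, s_r` are complex numbers whose real parts satisfy
`σ_1 + ⋯ + σ_k > k` for each `1 ≤ k ≤ r`, then the multiple zeta series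
`ζ(s_1, …, s_r) = ∑_{n_1 > ⋯ > n_r > 0} ∏_j n_j^{-s_j}` is absolutely convergent. -/
theorem mzv_absolutely_convergent (r : ℕ) (hr : 0 < r) (s : Fin r → ℂ)
    (h : ∀ k : ℕ, 1 ≤ k → k ≤ r →
      (k : ℝ) < ∑ j ∈ Finset.univ.filter (fun j : Fin r => (j : ℕ) < k), (s j).re) :
    Summable (fun n : {n : Fin r → ℕ // (∀ j, 0 < n j) ∧ ∀ i j : Fin r, i < j → n j < n i} =>
      ‖∏ j, (n.1 j : ℂ) ^ (-(s j))‖) :=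
  mzv_absolutely_convergent_general r s h
end

section
/- Let r be a positive integer, and let s_1, ..., s_r be complex numbers arranged so that their respective real parts σ_1, ..., σ_r satisfy σ_j ≤ σ_{j+1} for 1 ≤ j ≤ r−1. Let s be a complex number with real part σ. If for each integer k with 1 ≤ k ≤ r the inequality σ + σ_1 + ... + σ_k > k holds, then the Mordell–Tornheim series T(s_1, ..., s_r; s) = ∑_{m_1=1}^∞ ⋯ ∑_{m_r=1}^∞ 1/(m_1^{s_1} ⋯ m_r^{s_r} (m_1 + ⋯ + m_r)^s) is absolutely convergent. -/
/-!
The general term has absolute value `(∏ m_j^{σ_j} · M^σ)⁻¹` with `M = m_1 + ⋯ + m_r`, so it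
suffices to find `c > 0` and exponents `τ_j` with `σ_j + τ_j > 1` and `c ∏ m_j^{τ_j} ≤ M^σ`: the
series is then dominated by a product of convergent `p`-series.
If `σ ≤ 0`, then `M ≤ r ∏ m_j` allows `τ_j = σ`, and `σ_j + σ ≥ σ_1 + σ > 1`.
If `σ > 0`, then `m_j ≤ M` gives `∏ m_j^{τ_j} ≤ M^σ` for any `τ_j ≥ 0` summing to `σ`; take
`τ_j = max(0, 1 - σ_j) + δ`. This is possible since the `j` with `σ_j < 1` are the first `k`
indices, by monotonicity, and the hypothesis for this `k` says `∑_{σ_j < 1} (1 - σ_j) < σ`.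
-/

open Finset

section
variable {ι : Type*} [Fintype ι]

theorem summable_pi_prod_of_nonneg {κ : ι → Type*} {f : ∀ i, κ i → ℝ}
    (hf : ∀ i j, 0 ≤ f i j) (hsum : ∀ i, Summable (f i)) :
    Summable fun x : ∀ i, κ i => ∏ i, f i (x i) := by
  classical
  refine summable_of_sum_le (c := ∏ i, ∑' j, f i j)
    (fun x => prod_nonneg fun i _ => hf i (x i)) fun u => ?_
  calc ∑ x ∈ u, ∏ i, f i (x i)
      ≤ ∑ x ∈ Fintype.piFinset fun i => u.image (· i), ∏ i, f i (x i) :=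
        sum_le_sum_of_subset_of_nonneg
          (fun x hx => Fintype.mem_piFinset.2 fun i => mem_image_of_mem (· i) hx)
          fun x _ _ => prod_nonneg fun i _ => hf i (x i)
    _ = ∏ i, ∑ j ∈ u.image (· i), f i j := (prod_univ_sum _ _).symm
    _ ≤ ∏ i, ∑' j, f i j :=
        prod_le_prod (fun i _ => sum_nonneg fun j _ => hf i j)
          fun i _ => (hsum i).sum_le_tsum _ fun j _ => hf i j

theorem summable_prod_natCast_rpow_inv {t : ι → ℝ} (ht : ∀ i, 1 < t i) :
    Summable fun m : ι → ℕ => ∏ i, ((m i : ℝ) ^ t i)⁻¹ := by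
  exact summable_pi_prod_of_nonneg (f := fun i (n : ℕ) => ((n : ℝ) ^ t i)⁻¹)
    (fun i n => by positivity)
    fun i => Real.summable_nat_rpow_inv.2 (ht i)

theorem prod_rpow_le_sum_rpow_sum {x τ : ι → ℝ} (hx : ∀ i, 0 ≤ x i) (hτ : ∀ i, 0 ≤ τ i) :
    ∏ i, x i ^ τ i ≤ (∑ i, x i) ^ ∑ i, τ i := by
  rw [Real.rpow_sum_of_nonneg (sum_nonneg fun i _ => hx i) fun i _ => hτ i]
  exact prod_le_prod (fun i _ => Real.rpow_nonneg (hx i) _) fun i _ =>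
    Real.rpow_le_rpow (hx i) (single_le_sum (fun j _ => hx j) (mem_univ i)) (hτ i)

theorem card_rpow_mul_prod_rpow_le_sum_rpow [Nonempty ι] {x : ι → ℝ} (hx : ∀ i, 1 ≤ x i)
    {σ : ℝ} (hσ : σ ≤ 0) :
    (Fintype.card ι : ℝ) ^ σ * ∏ i, x i ^ σ ≤ (∑ i, x i) ^ σ := by
  have hx₀ : ∀ i, 0 ≤ x i := fun i => zero_le_one.trans (hx i)
  have hsum_pos : 0 < ∑ i, x i := sum_pos (fun i _ => zero_lt_one.trans_le (hx i)) univ_nonempty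
  have hsum_le : ∑ i, x i ≤ Fintype.card ι * ∏ i, x i := by
    calc ∑ i, x i ≤ ∑ _i : ι, ∏ j, x j :=
          sum_le_sum fun i _ => Multiset.mem_le_prod_of_one_le hx (mem_univ i)
      _ = Fintype.card ι * ∏ i, x i := by rw [sum_const, card_univ, nsmul_eq_mul]
  rw [Real.finsetProd_rpow _ _ fun i _ => hx₀ i, ← Real.mul_rpow (Nat.cast_nonneg _)
    (prod_nonneg fun i _ => hx₀ i)]
  exact Real.rpow_le_rpow_of_nonpos hsum_pos hsum_le hσ

theorem norm_inv_prod_natCast_cpow_mul_cpow [Nonempty ι] {m : ι → ℕ} (hm : ∀ i, 0 < m i)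
    (s' : ι → ℂ) (s : ℂ) :
    ‖((∏ i, (m i : ℂ) ^ s' i) * ((∑ i, m i : ℕ) : ℂ) ^ s)⁻¹‖
      = ((∏ i, (m i : ℝ) ^ (s' i).re) * (∑ i, (m i : ℝ)) ^ s.re)⁻¹ := by
  have hsum : 0 < ∑ i, m i := sum_pos (fun i _ => hm i) univ_nonempty
  rw [norm_inv, norm_mul, Complex.norm_natCast_cpow_of_pos hsum, norm_prod, Nat.cast_sum]
  simp only [Complex.norm_natCast_cpow_of_pos (hm _)]

end

theorem Fin.filter_eq_filter_val_lt_card {r : ℕ} (p : Fin r → Prop) [DecidablePred p]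
    (hp : ∀ i j, i ≤ j → p j → p i) :
    univ.filter p = univ.filter fun j : Fin r => (j : ℕ) < #(univ.filter p) := by
  ext j
  simp only [mem_filter, mem_univ, true_and]
  constructor
  · intro hj
    have := card_le_card fun i hi => mem_filter.2 ⟨mem_univ i, hp i j (mem_Iic.1 hi) hj⟩
    rw [Fin.card_Iic] at this
    omega
  · intro hj
    by_contra hjA
    have : univ.filter p ⊆ Iio j := fun i hi =>
      mem_Iio.2 (lt_of_not_ge fun hji => hjA (hp j i hji (mem_filter.1 hi).2))
    have := card_le_card this
    rw [Fin.card_Iio] at this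
    omega

section
variable {r : ℕ} {σ' : Fin r → ℝ} {σ : ℝ}

theorem sum_filter_one_sub_lt (hmono : Monotone σ')
    (h : ∀ k : ℕ, 1 ≤ k → k ≤ r →
      (k : ℝ) < σ + ∑ j ∈ univ.filter (fun j : Fin r => (j : ℕ) < k), σ' j)
    (hσ : 0 < σ) :
    ∑ j ∈ univ.filter (fun j => σ' j < 1), (1 - σ' j) < σ := by
  set A := univ.filter fun j => σ' j < 1
  rcases Nat.eq_zero_or_pos #A with hk | hk
  · simpa [card_eq_zero.1 hk] using hσ
  · have hk_le : #A ≤ r := (card_le_univ A).trans_eq (Fintype.card_fin r)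
    have hcond := h #A hk hk_le
    rw [← Fin.filter_eq_filter_val_lt_card _ fun i j hij hj => (hmono hij).trans_lt hj] at hcond
    rw [sum_sub_distrib, sum_const, nsmul_one]
    linarith

theorem exists_prod_rpow_le_sum_rpow (hr : 0 < r) (hmono : Monotone σ')
    (h : ∀ k : ℕ, 1 ≤ k → k ≤ r →
      (k : ℝ) < σ + ∑ j ∈ univ.filter (fun j : Fin r => (j : ℕ) < k), σ' j) :
    ∃ c > 0, ∃ τ : Fin r → ℝ, (∀ j, 1 < σ' j + τ j) ∧
      ∀ x : Fin r → ℝ, (∀ j, 1 ≤ x j) → c * ∏ j, x j ^ τ j ≤ (∑ j, x j) ^ σ := by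
  have : Nonempty (Fin r) := ⟨⟨0, hr⟩⟩
  rcases le_or_gt σ 0 with hσ | hσ
  · refine ⟨r ^ σ, by positivity, fun _ => σ, fun j => ?_, fun x hx => ?_⟩
    · have hfilter : univ.filter (fun j : Fin r => (j : ℕ) < 1) = {⟨0, hr⟩} := by
        ext j
        simp [Fin.ext_iff]
      have h1 := h 1 le_rfl hr
      rw [hfilter, sum_singleton, Nat.cast_one] at h1
      linarith [hmono (show (⟨0, hr⟩ : Fin r) ≤ j from Nat.zero_le _)]
    · simpa using card_rpow_mul_prod_rpow_le_sum_rpow hx hσ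
  · set S := ∑ j ∈ univ.filter (fun j => σ' j < 1), (1 - σ' j)
    have hS : S < σ := sum_filter_one_sub_lt hmono h hσ
    set δ := (σ - S) / r
    have hδ : 0 < δ := div_pos (by linarith) (by exact_mod_cast hr)
    set τ : Fin r → ℝ := fun j => (if σ' j < 1 then 1 - σ' j else 0) + δ
    have hτ : ∀ j, 0 ≤ τ j := fun j => by
      simp only [τ]
      split_ifs <;> linarith
    have hτ_sum : ∑ j, τ j = σ := by
      simp only [τ, sum_add_distrib, ← sum_filter, sum_const, card_univ, Fintype.card_fin,
        nsmul_eq_mul, δ]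
      field_simp
      ring
    refine ⟨1, one_pos, τ, fun j => ?_, fun x hx => ?_⟩
    · simp only [τ]
      split_ifs <;> linarith
    · rw [one_mul, ← hτ_sum]
      exact prod_rpow_le_sum_rpow_sum (fun j => zero_le_one.trans (hx j)) hτ

end

/-- **Absolute convergence criterion for Mordell–Tornheim series.**
If `r ≥ 1` and `s_1, …, s_r` are complex numbers with real parts arranged so that
`σ_1 ≤ σ_2 ≤ ⋯ ≤ σ_r`, and `s` is a complex number with real part `σ` such that
`σ + σ_1 + ⋯ + σ_k > k` for every `1 ≤ k ≤ r`, then the Mordell–Tornheim series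
`T(s_1, …, s_r; s) = ∑_{m_1, …, m_r ≥ 1} 1/(m_1^{s_1} ⋯ m_r^{s_r} (m_1 + ⋯ + m_r)^s)`
is absolutely convergent. -/
theorem mordell_tornheim_absolutely_convergent (r : ℕ) (hr : 0 < r)
    (s' : Fin r → ℂ) (s : ℂ)
    (hmono : ∀ i j : Fin r, i ≤ j → (s' i).re ≤ (s' j).re)
    (h : ∀ k : ℕ, 1 ≤ k → k ≤ r →
      (k : ℝ) < s.re + ∑ j ∈ Finset.univ.filter (fun j : Fin r => (j : ℕ) < k), (s' j).re) :
    Summable (fun m : {m : Fin r → ℕ // ∀ j, 0 < m j} =>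
      ‖((∏ j, (m.1 j : ℂ) ^ (s' j)) * ((∑ j, m.1 j : ℕ) : ℂ) ^ s)⁻¹‖) := by
  have : Nonempty (Fin r) := ⟨⟨0, hr⟩⟩
  obtain ⟨c, hc, τ, hτ, hdom⟩ := exists_prod_rpow_le_sum_rpow hr (fun i j => hmono i j) h
  refine Summable.of_nonneg_of_le (fun _ => norm_nonneg _) (fun m => ?_)
    (((summable_prod_natCast_rpow_inv hτ).comp_injective Subtype.val_injective).mul_left c⁻¹)
  have hm : ∀ j, 1 ≤ (m.1 j : ℝ) := fun j => Nat.one_le_cast.2 (m.2 j)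
  have hprod : ∀ t : Fin r → ℝ, 0 < ∏ j, (m.1 j : ℝ) ^ t j := fun t =>
    prod_pos fun j _ => Real.rpow_pos_of_pos (zero_lt_one.trans_le (hm j)) _
  rw [norm_inv_prod_natCast_cpow_mul_cpow m.2]
  calc _ ≤ ((∏ j, (m.1 j : ℝ) ^ (s' j).re) * (c * ∏ j, (m.1 j : ℝ) ^ τ j))⁻¹ :=
        inv_anti₀ (mul_pos (hprod _) (mul_pos hc (hprod _)))
          (mul_le_mul_of_nonneg_left (hdom _ hm) (hprod _).le)
    _ = c⁻¹ * ∏ j, ((m.1 j : ℝ) ^ ((s' j).re + τ j))⁻¹ := by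
        simp only [Real.rpow_add (zero_lt_one.trans_le (hm _)), prod_mul_distrib,
          prod_inv_distrib, mul_inv]
        ring
end

section
/- The triple series ∑_{n_1 > n_2 > n_3 > 0} n_1^{-2} n_3^{-2}, summed over triples of positive integers with n_1 > n_2 > n_3, diverges (is not summable). Consequently, the conditions σ_1 > 1 and σ_1 + ⋯ + σ_r > r are not sufficient for absolute convergence of the multiple zeta series, since they are satisfied by s_1 = 2, s_2 = 0, s_3 = 2. -/
/-!
Already the terms with `n₃ = 1` diverge: for fixed `n₁` there are `n₁ - 2` choices of `n₂`,
each contributing `n₁⁻²`, so this slice is comparable to the harmonic series.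
-/

theorem summable_sigma_fin_iff {f : ℕ → ℝ} (hf : 0 ≤ f) :
    Summable (fun s : Σ n, Fin n => f s.1) ↔ Summable (fun n : ℕ => n * f n) := by
  rw [summable_sigma_of_nonneg fun s => hf s.1]
  simp [Summable.of_finite]

theorem not_summable_natCast_div_add_two_sq :
    ¬ Summable (fun n : ℕ => (n : ℝ) / ((n : ℝ) + 2) ^ 2) := by
  intro h
  refine Real.not_summable_natCast_inv (.of_nonneg_of_le (fun n => by positivity) ?_ (h.mul_left 9))
  -- `n⁻¹ ≤ 9 n / (n + 2)²` holds at `n = 0` as well, since `(0 : ℝ)⁻¹ = 0`.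
  intro n
  rcases Nat.eq_zero_or_pos n with rfl | hn
  · simp
  · have hn : (1 : ℝ) ≤ n := by exact_mod_cast hn
    rw [mul_div_assoc', inv_eq_one_div, div_le_div_iff₀ (by positivity) (by positivity)]
    nlinarith

def tripleOfSigmaFin (s : Σ n, Fin n) :
    {p : ℕ × ℕ × ℕ // 0 < p.2.2 ∧ p.2.2 < p.2.1 ∧ p.2.1 < p.1} :=
  ⟨(s.1 + 2, s.2 + 2, 1), one_pos, by simp, by simp⟩

theorem tripleOfSigmaFin_injective : Function.Injective tripleOfSigmaFin := by
  rintro ⟨n, k⟩ ⟨m, l⟩ h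
  simp only [tripleOfSigmaFin, Subtype.mk.injEq, Prod.mk.injEq, add_left_inj] at h
  obtain ⟨rfl, hkl, -⟩ := h
  rw [Fin.ext hkl]

/-- The triple series `∑_{n₁ > n₂ > n₃ > 0} n₁⁻² n₃⁻²` diverges: the family
`(n₁, n₂, n₃) ↦ n₁⁻² n₃⁻²`, indexed by triples of positive integers with
`n₁ > n₂ > n₃ > 0`, is not summable.  Hence the conditions `σ₁ > 1` and
`σ₁ + ⋯ + σ_r > r` (satisfied by `s₁ = 2, s₂ = 0, s₃ = 2`) do not suffice for
absolute convergence of the multiple zeta series. -/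
theorem counterexample_mzv_convergence :
    ¬ Summable (fun p : {p : ℕ × ℕ × ℕ // 0 < p.2.2 ∧ p.2.2 < p.2.1 ∧ p.2.1 < p.1} =>
      1 / ((p.1.1 : ℝ) ^ 2 * (p.1.2.2 : ℝ) ^ 2)) := by
  intro h
  have hslice : Summable (fun s : Σ n, Fin n => 1 / ((s.1 : ℝ) + 2) ^ 2) := by
    simpa [Function.comp_def, tripleOfSigmaFin] using h.comp_injective tripleOfSigmaFin_injective
  refine not_summable_natCast_div_add_two_sq ?_
  simpa [div_eq_mul_inv] using
    (summable_sigma_fin_iff (f := fun n => 1 / ((n : ℝ) + 2) ^ 2) fun n => by positivity).1 hslice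
end

section
/- Let r and s_1, s_2, ..., s_r be positive integers, and let x_1, x_2, ..., x_r be non-zero real numbers such that x := x_1 + x_2 + ⋯ + x_r ≠ 0. Then ∏_{j=1}^r x_j^{-s_j} = ∑_{j=1}^r ∑_{(a_k)_{k≠j}, 0 ≤ a_k ≤ s_k − 1} M_j · x^{-s_j - A_j} · ∏_{k≠j} x_k^{a_k - s_k}, where A_j := ∑_{k≠j} a_k and M_j := (s_j + A_j − 1)! / ((s_j − 1)! · ∏_{k≠j} a_k!). -/
/-!
Multiplying by `∏ j, x j ^ s j` and putting `t i = x i / x`, the identity becomes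
`∑ j, t j * ∑_{a < s, a j = s j - 1} multinomial(a) t^a = 1` whenever `∑ i, t i = 1`.
The box sum `G = ∑_{a < s} multinomial(a) t^a` truncates the geometric series
`1 / (1 - ∑ i, t i) = ∑_a multinomial(a) t^a`. By the recurrence
`multinomial(b) = ∑_{i, b i ≠ 0} multinomial(b - e_i)`, multiplying `G` by `∑ i, t i` gives back
`G - 1` plus the terms `t j t^a` that leave the box, i.e. those with `a j = s j - 1`; so
`(1 - ∑ i, t i) G = 1 - ∑ j, t j * ∑_{a < s, a j = s j - 1} multinomial(a) t^a`.
-/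

open Finset Function
open scoped Nat

theorem Finset.prod_apply_update_of_mem {ι M : Type*} {α : ι → Type*} [CommMonoid M]
    [DecidableEq ι] {s : Finset ι} {i : ι} (h : i ∈ s) (g : ∀ k, α k → M) (f : ∀ k, α k)
    (v : α i) : ∏ k ∈ s, g k (update f i v k) = g i v * ∏ k ∈ s \ {i}, g k (f k) := by
  rw [prod_congr rfl fun k _ => apply_update g f i v k, prod_update_of_mem h]

namespace Nat

theorem succ_mul_multinomial {α : Type*} [DecidableEq α] {s : Finset α} {a : α} (ha : a ∈ s)
    (f : α → ℕ) :
    (∑ i ∈ s, f i + 1) * multinomial s f = (f a + 1) * multinomial s (update f a (f a + 1)) := by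
  have hsum : ∑ i ∈ s, update f a (f a + 1) i = ∑ i ∈ s, f i + 1 := by
    rw [sum_update_of_mem ha, sum_eq_add_sum_sdiff_singleton_of_mem ha]; ring
  have hprod : ∏ i ∈ s, (update f a (f a + 1) i)! = (f a + 1) * ∏ i ∈ s, (f i)! := by
    rw [prod_apply_update_of_mem ha (fun _ n => n !), prod_eq_mul_prod_sdiff_singleton_of_mem ha,
      factorial_succ, mul_assoc]
  apply Nat.eq_of_mul_eq_mul_left (prod_factorial_pos s f)
  calc (∏ i ∈ s, (f i)!) * ((∑ i ∈ s, f i + 1) * multinomial s f)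
      = (∑ i ∈ s, f i + 1)! := by rw [mul_left_comm, multinomial_spec, factorial_succ]
    _ = _ := by rw [← hsum, ← multinomial_spec s, hprod]; ring

theorem multinomial_eq_sum_update_pred {α : Type*} [DecidableEq α] {s : Finset α} {f : α → ℕ}
    (hf : ∑ i ∈ s, f i ≠ 0) :
    multinomial s f = ∑ i ∈ s, if f i = 0 then 0 else multinomial s (update f i (f i - 1)) := by
  have key : ∀ i ∈ s, f i * multinomial s f =
      (∑ k ∈ s, f k) * if f i = 0 then 0 else multinomial s (update f i (f i - 1)) := by
    intro i hi
    split_ifs with hfi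
    · rw [hfi, zero_mul, mul_zero]
    · have hsucc := succ_mul_multinomial hi (update f i (f i - 1))
      have hsum : ∑ k ∈ s, update f i (f i - 1) k + 1 = ∑ k ∈ s, f k := by
        rw [sum_update_of_mem hi, sum_eq_add_sum_sdiff_singleton_of_mem hi (f := f)]; omega
      rwa [update_self, Nat.sub_add_cancel (Nat.pos_of_ne_zero hfi), update_idem,
        update_eq_self, hsum, eq_comm] at hsucc
  apply Nat.eq_of_mul_eq_mul_left (Nat.pos_of_ne_zero hf)
  rw [mul_sum, ← sum_congr rfl key, ← sum_mul]

end Nat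

namespace PartialFraction

variable {ι : Type*} [Fintype ι] [DecidableEq ι]

def box (s : ι → ℕ) : Finset (ι → ℕ) :=
  Fintype.piFinset fun i => range (s i)

theorem mem_box {s a : ι → ℕ} : a ∈ box s ↔ ∀ i, a i < s i := by
  simp [box]

theorem sum_box_update_succ {M : Type*} [AddCommMonoid M] (s : ι → ℕ) (i : ι)
    (g : (ι → ℕ) → M) :
    ∑ a ∈ box s with a i + 1 < s i, g (update a i (a i + 1)) = ∑ b ∈ box s with b i ≠ 0, g b := by
  refine sum_nbij' (fun a => update a i (a i + 1)) (fun b => update b i (b i - 1))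
    ?_ ?_ ?_ ?_ fun _ _ => rfl
  · intro a ha
    simp only [mem_filter, mem_box] at ha ⊢
    refine ⟨fun k => ?_, by simp⟩
    rcases eq_or_ne k i with rfl | hk
    · simpa using ha.2
    · simpa [hk] using ha.1 k
  · intro b hb
    simp only [mem_filter, mem_box] at hb ⊢
    refine ⟨fun k => ?_, ?_⟩
    · rcases eq_or_ne k i with rfl | hk
      · simp only [update_self]; have := hb.1 k; omega
      · simpa [hk] using hb.1 k
    · have := hb.1 i; simp only [update_self]; omega
  · intro a _
    simp
  · intro b hb
    simp only [mem_filter] at hb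
    simp [Nat.sub_add_cancel (Nat.pos_of_ne_zero hb.2)]

variable {R : Type*} [CommRing R]

def multinomialTerm (t : ι → R) (a : ι → ℕ) : R :=
  Nat.multinomial univ a * ∏ i, t i ^ a i

theorem mul_prod_pow_eq_prod_pow_update_succ (t : ι → R) (a : ι → ℕ) (i : ι) :
    t i * ∏ k, t k ^ a k = ∏ k, t k ^ update a i (a i + 1) k := by
  rw [prod_apply_update_of_mem (mem_univ i) (fun k n => t k ^ n),
    prod_eq_mul_prod_sdiff_singleton_of_mem (mem_univ i), pow_succ]
  ring

theorem sum_multinomialTerm_update_pred (t : ι → R) (b : ι → ℕ) :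
    ∑ i, (if b i ≠ 0 then (Nat.multinomial univ (update b i (b i - 1)) : R) * ∏ k, t k ^ b k
      else 0) = multinomialTerm t b - if b = 0 then 1 else 0 := by
  by_cases hb : b = 0
  · subst hb
    simp [multinomialTerm, Nat.multinomial]
  · have hsum : ∑ i, b i ≠ 0 := by
      simpa [sum_eq_zero_iff, funext_iff] using hb
    rw [if_neg hb, sub_zero, multinomialTerm, Nat.multinomial_eq_sum_update_pred hsum,
      Nat.cast_sum, sum_mul]
    refine sum_congr rfl fun i _ => ?_
    split_ifs <;> simp_all

theorem one_sub_sum_mul_sum_box {s : ι → ℕ} (hs : ∀ i, 0 < s i) (t : ι → R) :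
    (1 - ∑ i, t i) * ∑ a ∈ box s, multinomialTerm t a =
      1 - ∑ i, t i * ∑ a ∈ box s with a i + 1 = s i, multinomialTerm t a := by
  set G := ∑ a ∈ box s, multinomialTerm t a with hG
  have hsplit : ∀ i, G = ∑ a ∈ box s with a i + 1 < s i, multinomialTerm t a +
      ∑ a ∈ box s with a i + 1 = s i, multinomialTerm t a := by
    intro i
    rw [hG, ← sum_filter_add_sum_filter_not (box s) fun a => a i + 1 < s i]
    refine congrArg _ (sum_congr (filter_congr fun a ha => ?_) fun _ _ => rfl)
    have := mem_box.1 ha i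
    omega
  have hshift : ∀ i, t i * ∑ a ∈ box s with a i + 1 < s i, multinomialTerm t a =
      ∑ b ∈ box s with b i ≠ 0,
        (Nat.multinomial univ (update b i (b i - 1)) : R) * ∏ k, t k ^ b k := by
    intro i
    rw [mul_sum, ← sum_box_update_succ]
    refine sum_congr rfl fun a _ => ?_
    rw [multinomialTerm, mul_left_comm, mul_prod_pow_eq_prod_pow_update_succ]
    simp only [update_self, update_idem, Nat.add_sub_cancel, update_eq_self]
  have hlower : ∑ i, ∑ b ∈ box s with b i ≠ 0,
      (Nat.multinomial univ (update b i (b i - 1)) : R) * ∏ k, t k ^ b k = G - 1 := by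
    simp_rw [sum_filter]
    rw [sum_comm, sum_congr rfl fun b _ => sum_multinomialTerm_update_pred t b, sum_sub_distrib,
      sum_ite_eq' (box s) 0, if_pos ((mem_box (a := 0)).2 hs)]
  calc (1 - ∑ i, t i) * G
      = G - ∑ i, (t i * ∑ a ∈ box s with a i + 1 < s i, multinomialTerm t a +
          t i * ∑ a ∈ box s with a i + 1 = s i, multinomialTerm t a) := by
        simp_rw [← mul_add, ← hsplit, ← sum_mul]
        ring
    _ = _ := by
        rw [sum_add_distrib, sum_congr rfl fun i _ => hshift i, hlower]
        ring

theorem sum_mul_sum_box_face_eq_one {s : ι → ℕ} (hs : ∀ i, 0 < s i) {t : ι → R}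
    (ht : ∑ i, t i = 1) :
    ∑ i, t i * ∑ a ∈ box s with a i + 1 = s i, multinomialTerm t a = 1 := by
  have := one_sub_sum_mul_sum_box hs t
  rw [ht, sub_self, zero_mul, eq_comm, sub_eq_zero] at this
  exact this.symm

theorem sum_box_face_eq_sum_pi {M : Type*} [AddCommMonoid M] {s : ι → ℕ} {j : ι} (hj : 0 < s j)
    (g : (ι → ℕ) → M) :
    ∑ a ∈ box s with a j + 1 = s j, g a =
      ∑ a : (∀ k : {k // k ≠ j}, Fin (s k)), g fun k => if h : k = j then s j - 1 else a ⟨k, h⟩ := by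
  symm
  refine sum_bij' (fun a _ k => if h : k = j then s j - 1 else a ⟨k, h⟩)
    (fun b hb k => ⟨b k, mem_box.1 (mem_filter.1 hb).1 k⟩) (fun a _ => ?_) (fun _ _ => mem_univ _)
    (fun a _ => ?_) (fun b hb => ?_) fun _ _ => rfl
  · refine mem_filter.2 ⟨mem_box.2 fun k => ?_, by dsimp only; rw [dif_pos rfl]; omega⟩
    by_cases hk : k = j
    · subst hk; rw [dif_pos rfl]; omega
    · simp [hk]
  · ext k
    simp [k.2]
  · ext k
    by_cases hk : k = j
    · subst hk; rw [dif_pos rfl]; have := (mem_filter.1 hb).2; omega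
    · simp [hk]

variable {K : Type*} [Field K]

theorem multinomial_eq_factorial_div [CharZero K] {s a : ι → ℕ} {j : ι} (ha : a j + 1 = s j) :
    (Nat.multinomial univ a : K) =
      ((s j + ∑ k : {k // k ≠ j}, a k - 1)! : K) /
        (((s j - 1)! * ∏ k : {k // k ≠ j}, (a k)! : ℕ) : K) := by
  have hsum : ∑ k, a k = s j + ∑ k : {k // k ≠ j}, a k - 1 := by
    rw [Fintype.sum_eq_add_sum_subtype_ne _ j]; omega
  have hprod : ∏ k, (a k)! = (s j - 1)! * ∏ k : {k // k ≠ j}, (a k)! := by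
    rw [Fintype.prod_eq_mul_prod_subtype_ne _ j, show a j = s j - 1 by omega]
  rw [Nat.multinomial, Nat.cast_div (Nat.prod_factorial_dvd_factorial_sum _ _)
    (Nat.cast_ne_zero.2 (Nat.prod_factorial_pos _ _).ne'), hsum, hprod]

theorem div_mul_prod_div_pow_mul_prod_zpow {x : ι → K} (hx : ∀ k, x k ≠ 0) {X : K} (hX : X ≠ 0)
    {s a : ι → ℕ} {j : ι} (ha : a j + 1 = s j) :
    x j / X * (∏ k, (x k / X) ^ a k) * ∏ k, x k ^ (-(s k : ℤ)) =
      X ^ (-((s j : ℤ) + (∑ k : {k // k ≠ j}, a k : ℕ))) *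
        ∏ k : {k // k ≠ j}, x k ^ ((a k : ℤ) - s k) := by
  have hprod : (∏ k, (x k / X) ^ a k) * ∏ k, x k ^ (-(s k : ℤ)) =
      (∏ k, x k ^ ((a k : ℤ) - s k)) / X ^ ∑ k, a k := by
    simp_rw [div_pow]
    rw [prod_div_distrib, prod_pow_eq_pow_sum, div_mul_eq_mul_div, ← prod_mul_distrib]
    congr 1
    refine prod_congr rfl fun k _ => ?_
    rw [← zpow_natCast, ← zpow_add₀ (hx k), sub_eq_add_neg]
  have hj : x j ^ ((a j : ℤ) - s j) = (x j)⁻¹ := by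
    rw [show (a j : ℤ) - s j = -1 by omega, zpow_neg_one]
  rw [mul_assoc, hprod, Fintype.prod_eq_mul_prod_subtype_ne _ j, hj,
    Fintype.sum_eq_add_sum_subtype_ne _ j, ← Nat.cast_add, zpow_neg, zpow_natCast, ← ha]
  field_simp [hx j]
  ring

end PartialFraction

open PartialFraction

theorem partial_fraction_decomposition_general (r : ℕ)
    (s : Fin r → ℕ) (hs : ∀ j, 0 < s j)
    (x : Fin r → ℝ) (hx : ∀ j, x j ≠ 0) (hsum : (∑ j, x j) ≠ 0) :
    (∏ j, x j ^ (-(s j : ℤ))) =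
      ∑ j : Fin r, ∑ a : (∀ k : {k : Fin r // k ≠ j}, Fin (s k.1)),
        ((Nat.factorial (s j + (∑ k : {k : Fin r // k ≠ j}, (a k : ℕ)) - 1) : ℝ) /
            ((Nat.factorial (s j - 1) *
              ∏ k : {k : Fin r // k ≠ j}, Nat.factorial (a k) : ℕ) : ℝ)) *
          (∑ i, x i) ^ (-((s j : ℤ) + (∑ k : {k : Fin r // k ≠ j}, (a k : ℕ) : ℕ))) *
          ∏ k : {k : Fin r // k ≠ j}, x k.1 ^ ((a k : ℤ) - (s k.1 : ℤ)) := by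
  have ht : ∑ i, x i / ∑ k, x k = 1 := by rw [← sum_div, div_self hsum]
  rw [← one_mul (∏ j, x j ^ (-(s j : ℤ))), ← sum_mul_sum_box_face_eq_one hs ht, sum_mul]
  refine sum_congr rfl fun j _ => ?_
  rw [mul_sum, sum_mul, sum_box_face_eq_sum_pi (hs j)]
  refine sum_congr rfl fun a _ => ?_
  have ha : (fun k => if h : k = j then s j - 1 else (a ⟨k, h⟩ : ℕ)) j + 1 = s j := by
    dsimp only; rw [dif_pos rfl]; have := hs j; omega
  rw [multinomialTerm, mul_left_comm, mul_assoc,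
    div_mul_prod_div_pow_mul_prod_zpow hx hsum ha, multinomial_eq_factorial_div ha, mul_assoc]
  have hext : ∀ k : {k // k ≠ j}, (if h : k.1 = j then s j - 1 else (a ⟨k, h⟩ : ℕ)) = a k :=
    fun k => dif_neg k.2
  simp only [hext]

/-- **Partial fraction decomposition (Lemma parfrac).**
Let `r ≥ 1` and let `s_1, …, s_r` be positive integers, and let `x_1, …, x_r` be
nonzero reals with `x := x_1 + ⋯ + x_r ≠ 0`.  Then
`∏_j x_j^{-s_j} = ∑_{j=1}^r ∑_{(a_k)_{k≠j}, 0 ≤ a_k ≤ s_k - 1}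
   M_j · x^{-s_j - A_j} · ∏_{k≠j} x_k^{a_k - s_k}`,
where `A_j = ∑_{k≠j} a_k` and `M_j = (s_j + A_j - 1)!/((s_j - 1)! ∏_{k≠j} a_k!)`. -/
theorem partial_fraction_decomposition (r : ℕ) (hr : 0 < r)
    (s : Fin r → ℕ) (hs : ∀ j, 0 < s j)
    (x : Fin r → ℝ) (hx : ∀ j, x j ≠ 0) (hsum : (∑ j, x j) ≠ 0) :
    (∏ j, x j ^ (-(s j : ℤ))) =
      ∑ j : Fin r, ∑ a : (∀ k : {k : Fin r // k ≠ j}, Fin (s k.1)),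
        ((Nat.factorial (s j + (∑ k : {k : Fin r // k ≠ j}, (a k : ℕ)) - 1) : ℝ) /
            ((Nat.factorial (s j - 1) *
              ∏ k : {k : Fin r // k ≠ j}, Nat.factorial (a k) : ℕ) : ℝ)) *
          (∑ i, x i) ^ (-((s j : ℤ) + (∑ k : {k : Fin r // k ≠ j}, (a k : ℕ) : ℕ))) *
          ∏ k : {k : Fin r // k ≠ j}, x k.1 ^ ((a k : ℤ) - (s k.1 : ℤ)) :=
  partial_fraction_decomposition_general r s hs x hx hsum
end

section
/- Every Mordell–Tornheim zeta value of depth r and weight w can be expressed as a rational linear combination of multiple zeta values of depth r and weight w. That is, if s_1, ..., s_r, s are positive integers with s_1 + ⋯ + s_r + s = w (and the defining series of T(s_1, ..., s_r; s) converges absolutely), then T(s_1, ..., s_r; s) lies in the ℚ-linear span of the set of multiple zeta values ζ(t_1, ..., t_r) with positive integer arguments satisfying t_1 ≥ 2, t_1 + ⋯ + t_r = w. -/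
/-- The term of the Mordell–Tornheim series `T(s_1, …, s_r; s)` with positive integer
arguments, indexed by tuples of positive integers `m_1, …, m_r`. -/
noncomputable def MTterm (r : ℕ) (s' : Fin r → ℕ) (s : ℕ)
    (m : {m : Fin r → ℕ // ∀ j, 0 < m j}) : ℝ :=
  1 / ((∏ j, (m.1 j : ℝ) ^ s' j) * ((∑ j, m.1 j : ℕ) : ℝ) ^ s)

/-- The Mordell–Tornheim zeta value `T(s_1, …, s_r; s)`. -/
noncomputable def MT (r : ℕ) (s' : Fin r → ℕ) (s : ℕ) : ℝ :=
  ∑' m, MTterm r s' s m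

/-- The term of the multiple zeta series `ζ(t_1, …, t_r)` (with `t_1 = t 0`), indexed
by strictly decreasing tuples of positive integers `n_1 > n_2 > ⋯ > n_r > 0`. -/
noncomputable def MZVterm (r : ℕ) (t : Fin r → ℕ)
    (n : {n : Fin r → ℕ // (∀ j, 0 < n j) ∧ ∀ i j : Fin r, i < j → n j < n i}) : ℝ :=
  ∏ j, 1 / ((n.1 j : ℝ) ^ t j)

/-- The multiple zeta value `ζ(t_1, …, t_r)`. -/
noncomputable def MZV (r : ℕ) (t : Fin r → ℕ) : ℝ :=
  ∑' n, MZVterm r t n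

/-!
For positive reals `x₀, x₁, …` write `S_k = x₀ + ⋯ + x_k`. The partial fraction identity
`1 / (X y) = (1 / X + 1 / y) / (X + y)` merges a new variable `y = x_q` into a chain
`∏ S_k ^ (-a_k)`, so by induction `∏ x_j ^ (-s_j)` is a ℚ-linear combination of chains
`∏_k (x_{τ 0} + ⋯ + x_{τ k}) ^ (-e_k)` over orderings `τ`, all `e_k ≥ 1` and of the same weight.
Multiplying by `(x₀ + ⋯ + x_{r-1}) ^ (-s)` only raises the exponent of the last, full, sum, which
becomes `≥ 2`. At positive integers `m`, the sum of a chain over all `m` is `ζ(e_{r-1}, …, e_0)`,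
since `m ↦` partial sums is a bijection onto strictly decreasing tuples (the ordering `τ` only
permutes the summation variables). As the full sum is at least the geometric mean of the `m_j`,
each chain series converges, so summation is ℚ-linear on the span.
-/

open Finset Function

namespace MordellTornheim

noncomputable section

lemma map_mem_span {R M N : Type*} [Semiring R] [AddCommMonoid M] [Module R M]
    [AddCommMonoid N] [Module R N] (L : M →ₗ[R] N) {S : Set M} {S' : Set N}
    (h : ∀ g ∈ S, L g ∈ Submodule.span R S') {f : M} (hf : f ∈ Submodule.span R S) :
    L f ∈ Submodule.span R S' :=
  Submodule.span_le.2 (Set.image_subset_iff.2 h) (Submodule.apply_mem_span_image_of_mem_span L hf)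

lemma summable_and_tsum_mem_of_mem_span {ι : Type*} {S : Set (ι → ℝ)} {T : Submodule ℚ ℝ}
    (hS : ∀ g ∈ S, Summable g ∧ ∑' i, g i ∈ T) {f : ι → ℝ} (hf : f ∈ Submodule.span ℚ S) :
    Summable f ∧ ∑' i, f i ∈ T := by
  induction hf using Submodule.span_induction with
  | mem g hg => exact hS g hg
  | zero => exact ⟨summable_zero, by simp⟩
  | add f g _ _ hf hg =>
    exact ⟨hf.1.add hg.1, by simpa [hf.1.tsum_add hg.1] using T.add_mem hf.2 hg.2⟩
  | smul c f _ hf =>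
    exact ⟨hf.1.const_smul c, by simpa [hf.1.tsum_const_smul c] using T.smul_mem c hf.2⟩

lemma summable_fin_prod {f : ℕ → ℝ} (hf0 : ∀ n, 0 ≤ f n) (hf : Summable f) (d : ℕ) :
    Summable fun n : Fin d → ℕ => ∏ j, f (n j) := by
  induction d with
  | zero => exact .of_finite
  | succ d ih =>
    rw [← (Fin.consEquiv fun _ : Fin (d + 1) => ℕ).summable_iff]
    refine (hf.mul_of_nonneg ih hf0 fun _ => prod_nonneg fun _ _ => hf0 _).congr fun x => ?_
    simp [Fin.consEquiv, Fin.prod_univ_succ]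

lemma eq_of_forall_sum_range_eq {f g : ℕ → ℕ} {r : ℕ}
    (h : ∀ k ≤ r, ∑ i ∈ range k, f i = ∑ i ∈ range k, g i) : ∀ i < r, f i = g i := by
  intro i hi
  have := h (i + 1) hi
  rwa [sum_range_succ, sum_range_succ, h i hi.le, add_right_inj] at this

lemma inv_apply_eq_self_of_ge {r : ℕ} {τ : Equiv.Perm ℕ} (hτ : ∀ k, r ≤ k → τ k = k) :
    ∀ k, r ≤ k → τ⁻¹ k = k := fun k hk => by
  rw [Equiv.Perm.inv_eq_iff_eq, hτ k hk]

lemma one_div_pow_mul_one_div_pow_split {X y : ℝ} (hX : 0 < X) (hy : 0 < y) (a b g : ℕ) :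
    1 / X ^ (a + 1) * (1 / y ^ (b + 1)) * (1 / (X + y) ^ g) =
      1 / X ^ a * (1 / y ^ (b + 1)) * (1 / (X + y) ^ (g + 1)) +
        1 / X ^ (a + 1) * (1 / y ^ b) * (1 / (X + y) ^ (g + 1)) := by
  field_simp
  ring

/-! ### Chains of partial sums -/

abbrev PosSeq := {x : ℕ → ℝ // ∀ j, 0 < x j}

def reindex (τ : Equiv.Perm ℕ) (x : PosSeq) : PosSeq := ⟨fun j => x.1 (τ j), fun j => x.2 (τ j)⟩

def psum (x : PosSeq) (k : ℕ) : ℝ := ∑ i ∈ range (k + 1), x.1 i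

def chain (q : ℕ) (e : ℕ → ℕ) (x : PosSeq) : ℝ := ∏ k ∈ range q, 1 / psum x k ^ e k

def chains (r w : ℕ) : Set (PosSeq → ℝ) :=
  {f | ∃ (τ : Equiv.Perm ℕ) (e : ℕ → ℕ), (∀ k, r ≤ k → τ k = k) ∧ (∀ k < r, 1 ≤ e k) ∧
    ∑ k ∈ range r, e k = w ∧ f = fun x => chain r e (reindex τ x)}

def admissibleChains (R w : ℕ) : Set (PosSeq → ℝ) :=
  {f | ∃ (τ : Equiv.Perm ℕ) (e : ℕ → ℕ), (∀ k, R + 1 ≤ k → τ k = k) ∧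
    (∀ k < R + 1, 1 ≤ e k) ∧ 2 ≤ e R ∧ ∑ k ∈ range (R + 1), e k = w ∧
    f = fun x => chain (R + 1) e (reindex τ x)}

lemma reindex_reindex (σ τ : Equiv.Perm ℕ) (x : PosSeq) :
    reindex σ (reindex τ x) = reindex (τ * σ) x := rfl

lemma reindex_one (x : PosSeq) : reindex 1 x = x := rfl

lemma psum_pos (x : PosSeq) (k : ℕ) : 0 < psum x k :=
  sum_pos (fun i _ => x.2 i) nonempty_range_add_one

lemma psum_succ (x : PosSeq) (k : ℕ) : psum x (k + 1) = psum x k + x.1 (k + 1) :=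
  sum_range_succ _ _

lemma psum_reindex {τ : Equiv.Perm ℕ} {k : ℕ} (hτ : ∀ i, k < i → τ i = i) (x : PosSeq) :
    psum (reindex τ x) k = psum x k :=
  τ.sum_comp (range (k + 1)) x.1 fun i hi => mem_range.2 <| by
    by_contra h
    exact hi (hτ i (by omega))

lemma chain_nonneg (q : ℕ) (e : ℕ → ℕ) (x : PosSeq) : 0 ≤ chain q e x :=
  prod_nonneg fun k _ => by have := psum_pos x k; positivity

lemma chain_succ (q : ℕ) (e : ℕ → ℕ) (x : PosSeq) :
    chain (q + 1) e x = chain q e x * (1 / psum x q ^ e q) :=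
  prod_range_succ _ _

lemma chain_congr {q : ℕ} (e : ℕ → ℕ) {x y : PosSeq} (h : ∀ k < q, x.1 k = y.1 k) :
    chain q e x = chain q e y := by
  refine prod_congr rfl fun k hk => ?_
  have : psum x k = psum y k :=
    sum_congr rfl fun i hi => h i (by simp only [mem_range] at hk hi; omega)
  rw [this]

lemma chain_update (q : ℕ) (e : ℕ → ℕ) (c : ℕ) (x : PosSeq) :
    chain (q + 1) (update e q c) x = chain q e x * (1 / psum x q ^ c) := by
  rw [chain_succ, update_self]
  congr 1
  exact prod_congr rfl fun k hk => by rw [update_of_ne (by simp only [mem_range] at hk; omega)]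

lemma sum_range_succ_update (e : ℕ → ℕ) (q c : ℕ) :
    ∑ k ∈ range (q + 1), update e q c k = ∑ k ∈ range q, e k + c := by
  rw [sum_range_succ, update_self]
  congr 1
  exact sum_congr rfl fun k hk => by rw [update_of_ne (by simp only [mem_range] at hk; omega)]

lemma one_le_update {q : ℕ} {e : ℕ → ℕ} {c : ℕ} (he : ∀ k < q, 1 ≤ e k) (hc : 1 ≤ c) :
    ∀ k < q + 1, 1 ≤ update e q c k := by
  intro k hk
  rcases eq_or_ne k q with rfl | hkq
  · rwa [update_self]
  · rw [update_of_ne hkq]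
    exact he k (by omega)

lemma chain_update_mem_chains {q : ℕ} {τ : Equiv.Perm ℕ} (hτ : ∀ k, q + 1 ≤ k → τ k = k)
    {e : ℕ → ℕ} (he : ∀ k < q, 1 ≤ e k) {c : ℕ} (hc : 1 ≤ c) :
    (fun x => chain (q + 1) (update e q c) (reindex τ x)) ∈
      chains (q + 1) (∑ k ∈ range q, e k + c) :=
  ⟨τ, update e q c, hτ, one_le_update he hc, sum_range_succ_update e q c, rfl⟩

lemma comp_reindex_mem_span_chains {r w : ℕ} {f : PosSeq → ℝ}
    (hf : f ∈ Submodule.span ℚ (chains r w)) {τ : Equiv.Perm ℕ} (hτ : ∀ k, r ≤ k → τ k = k) :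
    (fun x => f (reindex τ x)) ∈ Submodule.span ℚ (chains r w) := by
  refine map_mem_span (LinearMap.funLeft ℚ ℝ (reindex τ)) (fun g hg => ?_) hf
  obtain ⟨σ, e, hσ, he, hw, rfl⟩ := hg
  refine Submodule.subset_span ⟨τ * σ, e, fun k hk => ?_, he, hw, rfl⟩
  rw [Equiv.Perm.mul_apply, hσ k hk, hτ k hk]

lemma comp_reindex_mul_mem_span_chains {q w : ℕ} {f : PosSeq → ℝ}
    (hf : f ∈ Submodule.span ℚ (chains q w)) {τ : Equiv.Perm ℕ} (hτ : ∀ k, q + 1 ≤ k → τ k = k)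
    {c : ℕ} (hc : 1 ≤ c) :
    (fun x => f (reindex τ x) * (1 / psum x q ^ c)) ∈
      Submodule.span ℚ (chains (q + 1) (w + c)) := by
  refine map_mem_span ((LinearMap.mulRight ℚ fun x => 1 / psum x q ^ c).comp
    (LinearMap.funLeft ℚ ℝ (reindex τ))) (fun g hg => ?_) hf
  obtain ⟨σ, e, hσ, he, rfl, rfl⟩ := hg
  have hτσ : ∀ k, q + 1 ≤ k → (τ * σ) k = k := fun k hk => by
    rw [Equiv.Perm.mul_apply, hσ k (by omega), hτ k hk]
  have h : (fun x => chain q e (reindex σ (reindex τ x)) * (1 / psum x q ^ c)) =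
      fun x => chain (q + 1) (update e q c) (reindex (τ * σ) x) := funext fun x => by
    rw [reindex_reindex, chain_update, psum_reindex fun k hk => hτσ k hk]
  show (fun x => chain q e (reindex σ (reindex τ x)) * (1 / psum x q ^ c)) ∈ _
  exact h ▸ Submodule.subset_span (chain_update_mem_chains hτσ he hc)

/-! ### Merging a variable into a chain -/

/-- An intermediate stage of merging `x_{Q+1}` into the chain `S_0, …, S_Q`. -/
def mergeTerm (Q : ℕ) (a : ℕ → ℕ) (a' b' g : ℕ) (x : PosSeq) : ℝ :=
  chain Q a x * (1 / psum x Q ^ a') * (1 / x.1 (Q + 1) ^ b') * (1 / psum x (Q + 1) ^ g)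

lemma mergeTerm_succ_succ (Q : ℕ) (a : ℕ → ℕ) (a' b' g : ℕ) :
    mergeTerm Q a (a' + 1) (b' + 1) g =
      mergeTerm Q a a' (b' + 1) (g + 1) + mergeTerm Q a (a' + 1) b' (g + 1) := by
  funext x
  have h := one_div_pow_mul_one_div_pow_split (psum_pos x Q) (x.2 (Q + 1)) a' b' g
  simp only [mergeTerm, Pi.add_apply, psum_succ]
  linear_combination chain Q a x * h

lemma mergeTerm_mem_span {Q : ℕ} {a : ℕ → ℕ} (ha : ∀ k < Q, 1 ≤ a k)
    (hmerge : ∀ b, 1 ≤ b → (fun x => chain Q a x * (1 / x.1 Q ^ b)) ∈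
      Submodule.span ℚ (chains (Q + 1) (∑ k ∈ range Q, a k + b)))
    (a' b' g : ℕ) (hab : 1 ≤ a' + b') (hg : 1 ≤ g) :
    mergeTerm Q a a' b' g ∈
      Submodule.span ℚ (chains (Q + 2) (∑ k ∈ range Q, a k + a' + b' + g)) := by
  induction a' generalizing b' g with
  | zero =>
    -- with `x_Q` and `x_{Q+1}` swapped, this is `hmerge` times the factor `S_{Q+1} ^ (-g)`
    have hswap : ∀ k, Q + 2 ≤ k → Equiv.swap Q (Q + 1) k = k := fun k hk =>
      Equiv.swap_apply_of_ne_of_ne (by omega) (by omega)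
    have h := comp_reindex_mul_mem_span_chains (hmerge b' (by omega)) hswap hg
    have hterm : mergeTerm Q a 0 b' g = fun x =>
        chain Q a (reindex (Equiv.swap Q (Q + 1)) x) *
          (1 / (reindex (Equiv.swap Q (Q + 1)) x).1 Q ^ b') * (1 / psum x (Q + 1) ^ g) := by
      funext x
      have hlow : ∀ k < Q, x.1 k = (reindex (Equiv.swap Q (Q + 1)) x).1 k := fun k hk =>
        congrArg x.1 (Equiv.swap_apply_of_ne_of_ne (by omega) (by omega)).symm
      rw [mergeTerm, chain_congr a hlow]
      simp [reindex]
    rw [hterm, show ∑ k ∈ range Q, a k + 0 + b' + g = ∑ k ∈ range Q, a k + b' + g by omega]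
    exact h
  | succ A ihA =>
    induction b' generalizing g with
    | zero =>
      have hA : ∀ k < Q + 1, 1 ≤ update a Q (A + 1) k := one_le_update ha (by omega)
      have h := chain_update_mem_chains (q := Q + 1) (τ := 1) (by simp) hA hg
      rw [sum_range_succ_update] at h
      have hterm : mergeTerm Q a (A + 1) 0 g =
          fun x => chain (Q + 2) (update (update a Q (A + 1)) (Q + 1) g) (reindex 1 x) := by
        funext x
        rw [mergeTerm, chain_update, chain_update]
        simp [reindex]
      rw [hterm, add_zero]
      exact Submodule.subset_span h
    | succ B ihB =>
      rw [mergeTerm_succ_succ]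
      refine Submodule.add_mem _ ?_ ?_
      · convert ihA (B + 1) (g + 1) (by omega) (by omega) using 3
        omega
      · convert ihB (g + 1) (by omega) (by omega) using 3
        omega

lemma chain_mul_one_div_pow_mem_span (q : ℕ) {a : ℕ → ℕ} {b : ℕ} (ha : ∀ k < q, 1 ≤ a k)
    (hb : 1 ≤ b) : (fun x => chain q a x * (1 / x.1 q ^ b)) ∈
      Submodule.span ℚ (chains (q + 1) (∑ k ∈ range q, a k + b)) := by
  induction q generalizing a b with
  | zero =>
    refine Submodule.subset_span ⟨1, fun _ => b, by simp, fun _ _ => hb, by simp, ?_⟩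
    funext x
    simp [chain, psum, reindex]
  | succ Q ih =>
    obtain ⟨A, hA⟩ : ∃ A, a Q = A + 1 := ⟨a Q - 1, by have := ha Q (by omega); omega⟩
    obtain ⟨B, rfl⟩ : ∃ B, b = B + 1 := ⟨b - 1, by omega⟩
    have hterm : (fun x => chain (Q + 1) a x * (1 / x.1 (Q + 1) ^ (B + 1))) =
        mergeTerm Q a (A + 1) (B + 1) 0 := by
      funext x
      rw [mergeTerm, chain_succ, hA]
      ring
    have hmerge := mergeTerm_mem_span (fun k hk => ha k (by omega))
      (fun b hb => ih (fun k hk => ha k (by omega)) hb)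
    rw [hterm, mergeTerm_succ_succ, sum_range_succ, hA]
    refine Submodule.add_mem _ ?_ ?_
    · convert hmerge A (B + 1) 1 (by omega) le_rfl using 3
      omega
    · convert hmerge (A + 1) B 1 (by omega) le_rfl using 3
      omega

lemma prod_one_div_pow_mem_span_chains (r : ℕ) {s : ℕ → ℕ} (hs : ∀ j < r, 1 ≤ s j) :
    (fun x : PosSeq => ∏ j ∈ range r, 1 / x.1 j ^ s j) ∈
      Submodule.span ℚ (chains r (∑ j ∈ range r, s j)) := by
  induction r with
  | zero =>
    refine Submodule.subset_span ⟨1, s, by simp, by simp, rfl, ?_⟩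
    simp [chain]
  | succ r ih =>
    have hprod : (fun x : PosSeq => ∏ j ∈ range (r + 1), 1 / x.1 j ^ s j) =
        LinearMap.mulRight ℚ (fun x : PosSeq => 1 / x.1 r ^ s r)
          (fun x => ∏ j ∈ range r, 1 / x.1 j ^ s j) := by
      funext x
      simp [prod_range_succ, mul_comm]
    rw [hprod, sum_range_succ]
    refine map_mem_span _ (fun g hg => ?_) (ih fun j hj => hs j (by omega))
    obtain ⟨τ, e, hτ, he, hsum, rfl⟩ := hg
    rw [← hsum]
    have hgen : LinearMap.mulRight ℚ (fun x : PosSeq => 1 / x.1 r ^ s r)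
        (fun x => chain r e (reindex τ x)) =
          fun x => chain r e (reindex τ x) * (1 / (reindex τ x).1 r ^ s r) := by
      funext x
      simp [reindex, hτ r le_rfl]
    rw [hgen]
    exact comp_reindex_mem_span_chains (chain_mul_one_div_pow_mem_span r he (hs r (by omega)))
      fun k hk => hτ k (by omega)

def mtIntegrand (R : ℕ) (s' : ℕ → ℕ) (s : ℕ) (x : PosSeq) : ℝ :=
  (∏ j ∈ range (R + 1), 1 / x.1 j ^ s' j) * (1 / psum x R ^ s)

lemma mtIntegrand_mem_span (R : ℕ) {s' : ℕ → ℕ} {s w : ℕ} (hs' : ∀ j < R + 1, 1 ≤ s' j)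
    (hs : 1 ≤ s) (hw : ∑ j ∈ range (R + 1), s' j + s = w) :
    mtIntegrand R s' s ∈ Submodule.span ℚ (admissibleChains R w) := by
  refine map_mem_span (LinearMap.mulRight ℚ fun x => 1 / psum x R ^ s) (fun g hg => ?_)
    (prod_one_div_pow_mem_span_chains (R + 1) hs')
  obtain ⟨τ, e, hτ, he, hsum, rfl⟩ := hg
  have hgen : LinearMap.mulRight ℚ (fun x => 1 / psum x R ^ s)
      (fun x => chain (R + 1) e (reindex τ x)) =
        fun x => chain (R + 1) (update e R (e R + s)) (reindex τ x) := by
    funext x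
    rw [LinearMap.mulRight_apply, Pi.mul_apply, chain_update, chain_succ,
      ← psum_reindex (fun k hk => hτ k hk) x, pow_add]
    ring
  rw [hgen]
  refine Submodule.subset_span ⟨τ, _, hτ, one_le_update (fun k hk => he k (by omega))
    (by have := he R (by omega); omega), by rw [update_self]; have := he R (by omega); omega,
    ?_, rfl⟩
  rw [sum_range_succ_update, ← hw, ← hsum, sum_range_succ]
  ring

/-! ### Summation over positive integers -/

def padOne {r : ℕ} (f : Fin r → ℕ) (j : ℕ) : ℕ := if h : j < r then f ⟨j, h⟩ else 1

lemma padOne_fin {r : ℕ} (f : Fin r → ℕ) (j : Fin r) : padOne f j = f j := dif_pos j.2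

lemma padOne_of_le {r : ℕ} (f : Fin r → ℕ) {j : ℕ} (hj : r ≤ j) : padOne f j = 1 :=
  dif_neg (by omega)

lemma padOne_pos {r : ℕ} {f : Fin r → ℕ} (hf : ∀ j, 0 < f j) (j : ℕ) : 0 < padOne f j := by
  unfold padOne
  split_ifs
  exacts [hf _, one_pos]

lemma sum_range_padOne {r : ℕ} (f : Fin r → ℕ) : ∑ j ∈ range r, padOne f j = ∑ j, f j := by
  rw [← Fin.sum_univ_eq_sum_range]
  simp only [padOne_fin]

abbrev PosTuple (r : ℕ) := {m : Fin r → ℕ // ∀ j, 0 < m j}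

abbrev StrictAntiTuple (r : ℕ) :=
  {n : Fin r → ℕ // (∀ j, 0 < n j) ∧ ∀ i j : Fin r, i < j → n j < n i}

def toPosSeq {r : ℕ} (m : PosTuple r) : PosSeq :=
  ⟨fun j => padOne m.1 j, fun j => Nat.cast_pos.2 (padOne_pos m.2 j)⟩

lemma toPosSeq_injective {r : ℕ} : Injective (toPosSeq (r := r)) := fun m m' h =>
  Subtype.ext <| funext fun j => by
    simpa [toPosSeq, padOne_fin] using congrArg (fun x : PosSeq => x.1 j) h

def permute {r : ℕ} (τ : Equiv.Perm ℕ) (m : PosTuple r) : PosTuple r :=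
  ⟨fun j => padOne m.1 (τ j), fun _ => padOne_pos m.2 _⟩

lemma toPosSeq_permute {r : ℕ} {τ : Equiv.Perm ℕ} (hτ : ∀ k, r ≤ k → τ k = k)
    (m : PosTuple r) : toPosSeq (permute τ m) = reindex τ (toPosSeq m) := by
  refine Subtype.ext (funext fun j => ?_)
  simp only [toPosSeq, reindex, Nat.cast_inj]
  by_cases hj : j < r
  · exact padOne_fin _ ⟨j, hj⟩
  · rw [padOne_of_le _ (by omega), hτ j (by omega), padOne_of_le _ (by omega)]

def permuteEquiv {r : ℕ} (τ : Equiv.Perm ℕ) (hτ : ∀ k, r ≤ k → τ k = k) :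
    PosTuple r ≃ PosTuple r where
  toFun := permute τ
  invFun := permute τ⁻¹
  left_inv m := toPosSeq_injective <| by
    rw [toPosSeq_permute (inv_apply_eq_self_of_ge hτ), toPosSeq_permute hτ, reindex_reindex,
      mul_inv_cancel, reindex_one]
  right_inv m := toPosSeq_injective <| by
    rw [toPosSeq_permute hτ, toPosSeq_permute (inv_apply_eq_self_of_ge hτ), reindex_reindex,
      inv_mul_cancel, reindex_one]

lemma summable_chain_reindex_iff {r : ℕ} {τ : Equiv.Perm ℕ} (hτ : ∀ k, r ≤ k → τ k = k)
    (e : ℕ → ℕ) : Summable (fun m : PosTuple r => chain r e (reindex τ (toPosSeq m))) ↔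
      Summable (fun m : PosTuple r => chain r e (toPosSeq m)) := by
  simp_rw [← toPosSeq_permute hτ]
  exact (permuteEquiv τ hτ).summable_iff (f := fun m => chain r e (toPosSeq m))

lemma tsum_chain_reindex {r : ℕ} {τ : Equiv.Perm ℕ} (hτ : ∀ k, r ≤ k → τ k = k)
    (e : ℕ → ℕ) : ∑' m : PosTuple r, chain r e (reindex τ (toPosSeq m)) =
      ∑' m : PosTuple r, chain r e (toPosSeq m) := by
  simp_rw [← toPosSeq_permute hτ]
  exact (permuteEquiv τ hτ).tsum_eq fun m => chain r e (toPosSeq m)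

/-- `n_j = m_0 + ⋯ + m_{r-1-j}`, so that `n_0 > n_1 > ⋯ > n_{r-1} = m_0`. -/
def partialSums {r : ℕ} (m : PosTuple r) : StrictAntiTuple r :=
  ⟨fun j => ∑ i ∈ range (r - j), padOne m.1 i,
    fun j => sum_pos (fun i _ => padOne_pos m.2 i) (nonempty_range_iff.2 (by omega)),
    fun i j hij => sum_lt_sum_of_subset (range_subset_range.2 (by omega))
      (mem_range.2 (show r - j < r - i by omega)) (by simp) (padOne_pos m.2 _)
      fun _ _ _ => Nat.zero_le _⟩

lemma partialSums_injective {r : ℕ} : Injective (partialSums (r := r)) := by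
  intro m m' h
  have hsum : ∀ k ≤ r, ∑ i ∈ range k, padOne m.1 i = ∑ i ∈ range k, padOne m'.1 i := by
    intro k hk
    rcases Nat.eq_zero_or_pos k with rfl | hk0
    · rfl
    · simpa [partialSums, Nat.sub_sub_self hk] using
        congrArg (fun n : StrictAntiTuple r => n.1 ⟨r - k, by omega⟩) h
  exact Subtype.ext <| funext fun j => by
    simpa [padOne_fin] using eq_of_forall_sum_range_eq hsum j j.2

lemma partialSums_surjective {r : ℕ} : Surjective (partialSums (r := r)) := by
  intro n
  -- `g k = n_{r-k}` (with `g 0 = 0`) is the sequence of partial sums of the preimage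
  let g : ℕ → ℕ := fun k => if h : r - k < r then n.1 ⟨r - k, h⟩ else 0
  have hgap : ∀ i < r, g i < g (i + 1) := by
    intro i hi
    simp only [g, dif_pos (show r - (i + 1) < r by omega)]
    split_ifs
    · exact n.2.2 _ _ (Fin.mk_lt_mk.2 (by omega))
    · exact n.2.1 _
  have hg : Monotone g := monotone_nat_of_le_succ fun i => by
    rcases lt_or_ge i r with hi | hi
    · exact (hgap i hi).le
    · simp only [g, show r - i = r - (i + 1) by omega, le_refl]
  refine ⟨⟨fun j => g (j + 1) - g j, fun j => Nat.sub_pos_of_lt (hgap j j.2)⟩,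
    Subtype.ext <| funext fun j => ?_⟩
  have hpad : ∀ i ∈ range (r - j), padOne (fun j : Fin r => g (j + 1) - g j) i = g (i + 1) - g i :=
    fun i hi => padOne_fin _ ⟨i, by simp only [mem_range] at hi; omega⟩
  simp only [partialSums, sum_congr rfl hpad, sum_range_tsub hg]
  simp [g, Nat.sub_sub_self j.2.le, Nat.pos_iff_ne_zero.1 (j.pos)]

lemma MZVterm_partialSums {r : ℕ} (e : ℕ → ℕ) (m : PosTuple r) :
    MZVterm r (fun j => e (r - 1 - j)) (partialSums m) = chain r e (toPosSeq m) := by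
  rw [MZVterm, chain, ← prod_range_reflect, ← Fin.prod_univ_eq_prod_range]
  refine prod_congr rfl fun j _ => ?_
  simp only [partialSums, psum, toPosSeq, Nat.cast_sum, show r - 1 - j + 1 = r - j by omega]

lemma tsum_chain_toPosSeq {r : ℕ} (e : ℕ → ℕ) :
    ∑' m : PosTuple r, chain r e (toPosSeq m) = MZV r (fun j => e (r - 1 - j)) := by
  rw [MZV, ← (Equiv.ofBijective _ ⟨partialSums_injective, partialSums_surjective⟩).tsum_eq]
  exact tsum_congr fun m => (MZVterm_partialSums e m).symm

lemma chain_anti {q : ℕ} {e e' : ℕ → ℕ} {x : PosSeq} (hx : ∀ k, 1 ≤ psum x k)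
    (h : ∀ k < q, e k ≤ e' k) : chain q e' x ≤ chain q e x :=
  prod_le_prod (fun k _ => by have := psum_pos x k; positivity) fun k hk =>
    one_div_le_one_div_of_le (by have := psum_pos x k; positivity)
      (pow_le_pow_right₀ (hx k) (h k (mem_range.1 hk)))

lemma chain_one_le_prod (q : ℕ) (x : PosSeq) : chain q 1 x ≤ ∏ k ∈ range q, 1 / x.1 k :=
  prod_le_prod (fun k _ => by have := psum_pos x k; positivity) fun k _ => by
    rw [Pi.one_apply, pow_one]
    exact one_div_le_one_div_of_le (x.2 k)
      (single_le_sum (fun i _ => (x.2 i).le) (self_mem_range_succ k))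

lemma one_div_psum_le_prod_rpow (R : ℕ) (x : PosSeq) :
    1 / psum x R ≤ ∏ k ∈ range (R + 1), 1 / x.1 k ^ ((R : ℝ) + 1)⁻¹ := by
  have hle : ∏ k ∈ range (R + 1), x.1 k ^ ((R : ℝ) + 1)⁻¹ ≤ psum x R :=
    calc ∏ k ∈ range (R + 1), x.1 k ^ ((R : ℝ) + 1)⁻¹
        ≤ ∏ _k ∈ range (R + 1), psum x R ^ ((R : ℝ) + 1)⁻¹ :=
          prod_le_prod (fun k _ => by have := x.2 k; positivity) fun k hk =>
            Real.rpow_le_rpow (x.2 k).le (single_le_sum (fun i _ => (x.2 i).le) hk)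
              (by positivity)
      _ = psum x R := by
          rw [prod_const, card_range, ← Real.rpow_mul_natCast (psum_pos x R).le]
          push_cast
          rw [inv_mul_cancel₀ (by positivity), Real.rpow_one]
  rw [prod_div_distrib, prod_const_one]
  exact one_div_le_one_div_of_le (prod_pos fun k _ => by have := x.2 k; positivity) hle

lemma chain_le_prod_rpow {R : ℕ} {e : ℕ → ℕ} {x : PosSeq} (hx : ∀ j, 1 ≤ x.1 j)
    (he : ∀ k < R + 1, 1 ≤ e k) (he2 : 2 ≤ e R) :
    chain (R + 1) e x ≤ ∏ k ∈ range (R + 1), 1 / x.1 k ^ (1 + ((R : ℝ) + 1)⁻¹) := by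
  have hpsum : ∀ k, 1 ≤ psum x k := fun k =>
    (hx 0).trans (single_le_sum (fun i _ => (x.2 i).le) (mem_range.2 k.succ_pos))
  calc chain (R + 1) e x ≤ chain (R + 1) (update 1 R 2) x := chain_anti hpsum fun k hk => by
        rcases eq_or_ne k R with rfl | hkR
        · rwa [update_self]
        · rw [update_of_ne hkR]
          exact he k hk
    _ = chain (R + 1) 1 x * (1 / psum x R) := by
        rw [chain_update, chain_succ, Pi.one_apply]
        ring
    _ ≤ (∏ k ∈ range (R + 1), 1 / x.1 k) * ∏ k ∈ range (R + 1), 1 / x.1 k ^ ((R : ℝ) + 1)⁻¹ :=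
        mul_le_mul (chain_one_le_prod _ x) (one_div_psum_le_prod_rpow R x)
          (by have := psum_pos x R; positivity)
          (prod_nonneg fun k _ => by have := x.2 k; positivity)
    _ = ∏ k ∈ range (R + 1), 1 / x.1 k ^ (1 + ((R : ℝ) + 1)⁻¹) := by
        rw [← prod_mul_distrib]
        refine prod_congr rfl fun k _ => ?_
        rw [Real.rpow_add (x.2 k), Real.rpow_one]
        ring

lemma summable_chain_toPosSeq {R : ℕ} {e : ℕ → ℕ} (he : ∀ k < R + 1, 1 ≤ e k)
    (he2 : 2 ≤ e R) : Summable fun m : PosTuple (R + 1) => chain (R + 1) e (toPosSeq m) := by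
  have hp : 1 < 1 + ((R : ℝ) + 1)⁻¹ := lt_add_of_pos_right 1 (by positivity)
  have hsum := (summable_fin_prod (fun n => by positivity) (Real.summable_nat_rpow_inv.2 hp)
    (R + 1)).subtype {m | ∀ j, 0 < m j}
  refine Summable.of_nonneg_of_le (fun m => chain_nonneg _ e _) (fun m => ?_) hsum
  calc chain (R + 1) e (toPosSeq m)
      ≤ ∏ k ∈ range (R + 1), 1 / (toPosSeq m).1 k ^ (1 + ((R : ℝ) + 1)⁻¹) :=
        chain_le_prod_rpow (fun j => Nat.one_le_cast.2 (padOne_pos m.2 j)) he he2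
    _ = ∏ j, ((m.1 j : ℝ) ^ (1 + ((R : ℝ) + 1)⁻¹))⁻¹ := by
        rw [← Fin.prod_univ_eq_prod_range]
        simp [toPosSeq, padOne_fin]

lemma summable_and_tsum_eq_MZV {R w : ℕ} {f : PosSeq → ℝ} (hf : f ∈ admissibleChains R w) :
    Summable (fun m : PosTuple (R + 1) => f (toPosSeq m)) ∧
      ∃ t : Fin (R + 1) → ℕ, (∀ j, 0 < t j) ∧ 2 ≤ t ⟨0, R.succ_pos⟩ ∧ ∑ j, t j = w ∧
        ∑' m : PosTuple (R + 1), f (toPosSeq m) = MZV (R + 1) t := by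
  obtain ⟨τ, e, hτ, he, he2, hw, rfl⟩ := hf
  refine ⟨(summable_chain_reindex_iff hτ e).2 (summable_chain_toPosSeq he he2),
    fun j => e (R - j), fun j => he _ (by omega), he2, ?_, ?_⟩
  · rw [← hw, ← sum_range_reflect e (R + 1)]
    exact Fin.sum_univ_eq_sum_range (fun j => e (R - j)) (R + 1)
  · rw [tsum_chain_reindex hτ, tsum_chain_toPosSeq]
    simp

lemma MTterm_eq {R : ℕ} (s' : Fin (R + 1) → ℕ) (s : ℕ) (m : PosTuple (R + 1)) :
    MTterm (R + 1) s' s m = mtIntegrand R (padOne s') s (toPosSeq m) := by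
  have hprod : ∏ j ∈ range (R + 1), 1 / (toPosSeq m).1 j ^ padOne s' j =
      (∏ j, (m.1 j : ℝ) ^ s' j)⁻¹ := by
    rw [← Fin.prod_univ_eq_prod_range (fun j => 1 / (toPosSeq m).1 j ^ padOne s' j),
      ← prod_inv_distrib]
    simp [toPosSeq, padOne_fin]
  have hpsum : psum (toPosSeq m) R = ((∑ j, m.1 j : ℕ) : ℝ) := by
    rw [psum, ← Fin.sum_univ_eq_sum_range]
    simp [toPosSeq, padOne_fin]
  rw [MTterm, mtIntegrand, hprod, hpsum, one_div, one_div, mul_inv]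

end

end MordellTornheim

open MordellTornheim

theorem mt_mem_span_mzv_general (r w : ℕ) (hr : 0 < r) (s' : Fin r → ℕ) (s : ℕ)
    (hs' : ∀ j, 0 < s' j) (hs : 0 < s) (hw : (∑ j, s' j) + s = w) :
    MT r s' s ∈ Submodule.span ℚ
      {z : ℝ | ∃ t : Fin r → ℕ, (∀ j, 0 < t j) ∧ 2 ≤ t ⟨0, hr⟩ ∧ (∑ j, t j) = w ∧
        z = MZV r t} := by
  obtain ⟨R, rfl⟩ : ∃ R, r = R + 1 := ⟨r - 1, by omega⟩
  have hMT : MTterm (R + 1) s' s = LinearMap.funLeft ℚ ℝ toPosSeq (mtIntegrand R (padOne s') s) :=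
    funext (MTterm_eq s' s)
  have hspan := mtIntegrand_mem_span R (fun j _ => padOne_pos hs' j) hs
    (by rw [sum_range_padOne, hw])
  refine (summable_and_tsum_mem_of_mem_span ?_
    (hMT ▸ Submodule.apply_mem_span_image_of_mem_span _ hspan)).2
  rintro _ ⟨f, hf, rfl⟩
  obtain ⟨hsum, t, ht, ht2, htw, htsum⟩ := summable_and_tsum_eq_MZV hf
  exact ⟨hsum, Submodule.subset_span ⟨t, ht, ht2, htw, htsum⟩⟩

/-- **Theorem (Mordell–Tornheim values are ℚ-linear combinations of MZVs).**
If `s_1, …, s_r, s` are positive integers of total weight `w` whose Mordell–Tornheim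
series converges absolutely, then `T(s_1, …, s_r; s)` lies in the ℚ-linear span of the
multiple zeta values of depth `r` and weight `w` (with first argument at least 2). -/
theorem mt_mem_span_mzv (r w : ℕ) (hr : 0 < r) (s' : Fin r → ℕ) (s : ℕ)
    (hs' : ∀ j, 0 < s' j) (hs : 0 < s) (hw : (∑ j, s' j) + s = w)
    (hconv : Summable (MTterm r s' s)) :
    MT r s' s ∈ Submodule.span ℚ
      {z : ℝ | ∃ t : Fin r → ℕ, (∀ j, 0 < t j) ∧ 2 ≤ t ⟨0, hr⟩ ∧ (∑ j, t j) = w ∧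
        z = MZV r t} :=
  mt_mem_span_mzv_general r w hr s' s hs' hs hw
end

section
/- For positive integers s_1, ..., s_r and s such that the relevant series converge absolutely, the Mordell–Tornheim value satisfies the identity T(s_1, ..., s_r; s) = ∑_{j=1}^r ∑_{(a_k)_{k≠j}, 0 ≤ a_k ≤ s_k − 1} M_j · T_{r−1}(s_1 − a_1, ..., ŝ_j, ..., s_r − a_r, s + s_j + A_j), where the hat denotes omission of the j-th entry, A_j := ∑_{k≠j} a_k, and M_j := (s_j + A_j − 1)! / ((s_j − 1)! · ∏_{k≠j} a_k!). -/
/-- The term of the auxiliary series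
`T_l(t_1, …, t_r) = ∑_{m_1, …, m_r ≥ 1} (∏_{k ≤ l} m_k^{-t_k})(∏_{k > l} n_k^{-t_k})`
where `n_k = m_1 + ⋯ + m_k` (here `k : Fin r` is 0-indexed, so the first `l`
coordinates are the `m`-type factors). -/
noncomputable def Tlterm (r l : ℕ) (t : Fin r → ℕ)
    (m : {m : Fin r → ℕ // ∀ j, 0 < m j}) : ℝ :=
  ∏ k : Fin r,
    if (k : ℕ) < l then 1 / ((m.1 k : ℝ) ^ t k)
    else 1 / (((∑ j ∈ Finset.univ.filter (fun j : Fin r => j ≤ k), m.1 j : ℕ) : ℝ) ^ t k)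

/-- The value `T_l(t_1, …, t_r)`. -/
noncomputable def Tl (r l : ℕ) (t : Fin r → ℕ) : ℝ :=
  ∑' m, Tlterm r l t m


/-!
Put `X = x_1 + ⋯ + x_r` and `p_k = x_k / X`, and draw coordinates independently, `k` with
probability `p_k`, until some coordinate `j` has been drawn `s_j` times. This happens with the
other coordinates drawn `a_k < s_k` times with probability `M_j ∏_{k≠j} p_k^{a_k} · p_j^{s_j}`,
and these probabilities add up to `1`. Multiplying that identity by `∏_k x_k^{-s_k} · X^{-s}`
writes the summand of `T` as a combination of summands of `T_{r-1}` with coordinate `j` moved to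
the end; summing over `m` gives the theorem.
-/
open Finset
open scoped Nat

section Multinomial

variable {ι : Type*} [DecidableEq ι]

theorem single_one_le_iff {c : ι → ℕ} {k : ι} : Pi.single k 1 ≤ c ↔ 0 < c k := by
  refine ⟨fun h => (by simpa using h k : 1 ≤ c k), fun h i => ?_⟩
  rcases eq_or_ne i k with rfl | hi
  · simpa using Nat.one_le_of_lt h
  · simp [hi]

variable [Fintype ι]

theorem succ_mul_multinomial_add_single (c : ι → ℕ) (k : ι) :
    (c k + 1) * Nat.multinomial univ (c + Pi.single k 1) =
      (∑ i, c i + 1) * Nat.multinomial univ c := by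
  have hsum : ∑ i, (c + Pi.single k 1 : ι → ℕ) i = ∑ i, c i + 1 := by
    simp [sum_add_distrib]
  have hprod : ∏ i, ((c + Pi.single k 1 : ι → ℕ) i)! = (c k + 1) * ∏ i, (c i)! := by
    rw [← mul_prod_erase _ _ (mem_univ k), ← mul_prod_erase _ _ (mem_univ k),
      prod_congr rfl fun i hi => by rw [Pi.add_apply, Pi.single_eq_of_ne (ne_of_mem_erase hi),
        add_zero]]
    simp [Nat.factorial_succ, mul_assoc]
  have hspec := Nat.multinomial_spec univ (c + Pi.single k 1)
  rw [hsum, hprod, Nat.factorial_succ, ← Nat.multinomial_spec univ c] at hspec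
  refine Nat.eq_of_mul_eq_mul_left (prod_pos (s := univ) fun i _ => Nat.factorial_pos (c i)) ?_
  linear_combination hspec

theorem multinomial_eq_sum_sub_single {c : ι → ℕ} (hc : c ≠ 0) :
    Nat.multinomial univ c =
      ∑ k ∈ univ.filter (fun k => 0 < c k), Nat.multinomial univ (c - Pi.single k 1) := by
  have hn : ∑ i, c i ≠ 0 := by simpa [sum_eq_zero_iff, funext_iff] using hc
  have hk : ∀ k, 0 < c k →
      c k * Nat.multinomial univ c = (∑ i, c i) * Nat.multinomial univ (c - Pi.single k 1) := by
    intro k hk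
    obtain ⟨c, rfl⟩ : ∃ c' : ι → ℕ, c = c' + Pi.single k 1 :=
      ⟨_, (tsub_add_cancel_of_le (single_one_le_iff.2 hk)).symm⟩
    simpa [sum_add_distrib] using succ_mul_multinomial_add_single c k
  apply Nat.eq_of_mul_eq_mul_left (Nat.pos_of_ne_zero hn)
  calc (∑ i, c i) * Nat.multinomial univ c
      = ∑ k ∈ univ.filter (fun k => 0 < c k), c k * Nat.multinomial univ c := by
        rw [← sum_mul, sum_filter_of_ne fun k _ h => Nat.pos_of_ne_zero h]
    _ = _ := by rw [mul_sum]; exact sum_congr rfl fun k hk' => hk k (mem_filter.1 hk').2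

theorem filter_Iic_pos_eq_map {t : ι → ℕ} {k : ι} (hk : 0 < t k) :
    (Iic t).filter (fun c => 0 < c k) =
      (Iic (t - Pi.single k 1)).map (addRightEmbedding (Pi.single k 1)) := by
  have hle : Pi.single k 1 ≤ t := single_one_le_iff.2 hk
  ext c
  simp only [mem_filter, mem_Iic, mem_map, addRightEmbedding_apply]
  constructor
  · rintro ⟨hct, hck⟩
    exact ⟨c - Pi.single k 1, tsub_le_tsub_right hct _,
      tsub_add_cancel_of_le (single_one_le_iff.2 hck)⟩
  · rintro ⟨c, hc, rfl⟩
    exact ⟨(le_tsub_iff_right hle).1 hc, by simp⟩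

theorem sum_Iic_multinomial_mul {R : Type*} [CommSemiring R] (t : ι → ℕ) (F : (ι → ℕ) → R) :
    ∑ c ∈ Iic t, (Nat.multinomial univ c : R) * F c =
      F 0 + ∑ k ∈ univ.filter (fun k => 0 < t k),
        ∑ c ∈ Iic (t - Pi.single k 1), (Nat.multinomial univ c : R) * F (c + Pi.single k 1) := by
  have hpascal : ∀ c ∈ (Iic t).erase 0, (Nat.multinomial univ c : R) * F c =
      ∑ k ∈ univ.filter (fun k => 0 < c k),
        (Nat.multinomial univ (c - Pi.single k 1) : R) * F c := by
    intro c hc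
    rw [multinomial_eq_sum_sub_single (ne_of_mem_erase hc), Nat.cast_sum, sum_mul]
  have hshift : ∀ k ∈ univ.filter (fun k => 0 < t k),
      ∑ c ∈ (Iic t).filter (fun c => 0 < c k),
          (Nat.multinomial univ (c - Pi.single k 1) : R) * F c =
        ∑ c ∈ Iic (t - Pi.single k 1), (Nat.multinomial univ c : R) * F (c + Pi.single k 1) := by
    intro k hk
    rw [filter_Iic_pos_eq_map (mem_filter.1 hk).2, sum_map]
    simp only [addRightEmbedding_apply, add_tsub_cancel_right]
  have hzero : ∑ k ∈ univ.filter (fun k => 0 < (0 : ι → ℕ) k),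
      (Nat.multinomial univ ((0 : ι → ℕ) - Pi.single k 1) : R) * F 0 = 0 := by simp
  rw [← add_sum_erase _ _ (mem_Iic.2 zero_le), sum_congr rfl hpascal, sum_erase (Iic t) hzero,
    ← sum_congr rfl hshift]
  congr 1
  · simp [Nat.multinomial]
  · refine sum_comm' fun c k => ?_
    simp only [mem_filter, mem_Iic, mem_univ, true_and]
    exact ⟨fun ⟨hct, hck⟩ => ⟨⟨hct, hck⟩, hck.trans_le (hct k)⟩, fun h => h.1⟩

/-- `c` counts the draws before the deciding one, which is a draw of a coordinate `j` with
`c j = t j`. -/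
theorem sum_multinomial_first_passage_eq_one {R : Type*} [CommSemiring R]
    (p : ι → R) (hp : ∑ k, p k = 1) (t : ι → ℕ) :
    ∑ c ∈ Iic t, (Nat.multinomial univ c : R) *
      ((∏ k, p k ^ c k) * ∑ j ∈ univ.filter (fun j => c j = t j), p j) = 1 := by
  induction t using WellFoundedLT.induction with
  | _ t ih =>
  have hstep : ∀ k ∈ univ.filter (fun k => 0 < t k),
      ∑ c ∈ Iic (t - Pi.single k 1), (Nat.multinomial univ c : R) *
        ((∏ i, p i ^ (c + Pi.single k 1 : ι → ℕ) i) *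
          ∑ j ∈ univ.filter (fun j => (c + Pi.single k 1 : ι → ℕ) j = t j), p j) = p k := by
    intro k hk
    have htk : 0 < t k := (mem_filter.1 hk).2
    have hprod : ∀ c : ι → ℕ, ∏ i, p i ^ (c + Pi.single k 1 : ι → ℕ) i = p k * ∏ i, p i ^ c i := by
      intro c
      simp only [Pi.add_apply, pow_add, prod_mul_distrib]
      simp [Pi.single_apply, mul_comm]
    have hexit : ∀ c : ι → ℕ, univ.filter (fun j => (c + Pi.single k 1 : ι → ℕ) j = t j) =
        univ.filter (fun j => c j = (t - Pi.single k 1 : ι → ℕ) j) := by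
      intro c
      ext j
      rcases eq_or_ne j k with rfl | hj
      · simp only [mem_filter, mem_univ, true_and, Pi.add_apply, Pi.sub_apply, Pi.single_eq_same]
        omega
      · simp [hj]
    have hlt : t - Pi.single k 1 < t := Pi.lt_def.2 ⟨tsub_le_self, k, by simpa using htk⟩
    simp only [hprod, hexit, mul_assoc, ← mul_sum, mul_left_comm _ (p k)]
    rw [ih _ hlt, mul_one]
  rw [sum_Iic_multinomial_mul, sum_congr rfl hstep]
  simp only [Pi.zero_apply, pow_zero, prod_const_one, one_mul, @eq_comm _ 0, Nat.pos_iff_ne_zero]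
  rw [sum_filter_add_sum_filter_not, hp]

theorem inv_prod_pow_succ_eq_sum {K : Type*} [Field K] (x : ι → K) (hx : ∀ k, x k ≠ 0)
    (hX : ∑ k, x k ≠ 0) (t : ι → ℕ) :
    (∏ k, x k ^ (t k + 1))⁻¹ =
      ∑ c ∈ Iic t, ∑ j ∈ univ.filter (fun j => c j = t j),
        (Nat.multinomial univ c : K) * x j * (∏ k, x k ^ (t k + 1 - c k))⁻¹ *
          ((∑ k, x k) ^ (∑ k, c k + 1))⁻¹ := by
  set X := ∑ k, x k
  have hrace := sum_multinomial_first_passage_eq_one (fun k => x k / X)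
    (by rw [← sum_div, div_self hX]) t
  rw [← mul_one (∏ k, x k ^ (t k + 1))⁻¹, ← hrace, mul_sum]
  refine sum_congr rfl fun c hc => ?_
  simp only [mul_sum]
  refine sum_congr rfl fun j _ => ?_
  have hdiv : ∏ k, (x k / X) ^ c k = (∏ k, x k ^ c k) / X ^ (∑ k, c k) := by
    simp only [div_pow, prod_div_distrib, prod_pow_eq_pow_sum]
  have hsplit : ∏ k, x k ^ (t k + 1) = (∏ k, x k ^ (t k + 1 - c k)) * ∏ k, x k ^ c k := by
    rw [← prod_mul_distrib]
    refine prod_congr rfl fun k _ => ?_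
    rw [← pow_add, tsub_add_cancel_of_le ((mem_Iic.1 hc k).trans (Nat.le_succ _))]
  have hne : ∀ n : ι → ℕ, ∏ k, x k ^ n k ≠ 0 := fun n =>
    prod_ne_zero_iff.2 fun k _ => pow_ne_zero _ (hx k)
  rw [hdiv, hsplit]
  field_simp [hne]
  ring

end Multinomial

theorem sum_Iic_sum_filter_eq_sum_insertNth {M : Type*} [AddCommMonoid M] {d : ℕ}
    (t : Fin (d + 1) → ℕ) (G : Fin (d + 1) → (Fin (d + 1) → ℕ) → M) :
    ∑ c ∈ Iic t, ∑ j ∈ univ.filter (fun j => c j = t j), G j c =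
      ∑ j, ∑ a : (∀ i : Fin d, Fin (t (j.succAbove i) + 1)),
        G j (Fin.insertNth j (t j) fun i => (a i : ℕ)) := by
  rw [sum_comm' (t' := univ) (s' := fun j => (Iic t).filter fun c => c j = t j) (by simp)]
  refine sum_congr rfl fun j _ => Eq.symm ?_
  refine sum_bij' (fun a _ => Fin.insertNth j (t j) fun i => (a i : ℕ))
    (fun c hc i => ⟨c (j.succAbove i), Nat.lt_succ_of_le (mem_Iic.1 (mem_filter.1 hc).1 _)⟩)
    (fun a _ => ?_) (fun _ _ => mem_univ _) (fun a _ => ?_) (fun c hc => ?_) (fun _ _ => rfl)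
  · simp only [mem_filter, mem_Iic, Fin.insertNth_apply_same, and_true]
    intro k
    induction k using Fin.succAboveCases j with
    | x => simp
    | p i => simpa using Nat.le_of_lt_succ (a i).isLt
  · ext i
    simp
  · exact (Fin.insertNth_eq_iff.2 ⟨(mem_filter.1 hc).2.symm, rfl⟩)

theorem Nat.cast_multinomial_insertNth {K : Type*} [Field K] [CharZero K] {d : ℕ}
    (j : Fin (d + 1)) (n : ℕ) (a : Fin d → ℕ) :
    (Nat.multinomial univ (Fin.insertNth j n a) : K) =
      ((n + ∑ i, a i)! : K) / ((n ! * ∏ i, (a i)! : ℕ) : K) := by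
  have hspec := Nat.multinomial_spec univ (Fin.insertNth j n a)
  rw [Fin.prod_univ_succAbove _ j, Fin.sum_univ_succAbove _ j] at hspec
  simp only [Fin.insertNth_apply_same, Fin.insertNth_apply_succAbove] at hspec
  rw [eq_div_iff (Nat.cast_ne_zero.2 (by positivity)), ← hspec]
  push_cast
  ring

theorem Tlterm_snoc {d : ℕ} (u : Fin d → ℕ) (v : ℕ) (m : {m : Fin (d + 1) → ℕ // ∀ j, 0 < m j}) :
    Tlterm (d + 1) d (Fin.snoc u v) m =
      (∏ i, ((m.1 i.castSucc : ℝ) ^ u i)⁻¹) * (((∑ k, m.1 k : ℕ) : ℝ) ^ v)⁻¹ := by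
  have hfilter : univ.filter (fun k : Fin (d + 1) => k ≤ Fin.last d) = univ :=
    filter_true_of_mem fun k _ => Fin.le_last k
  simp [Tlterm, Fin.prod_univ_castSucc, hfilter]

def succAboveSnocPerm {d : ℕ} (j : Fin (d + 1)) : Equiv.Perm (Fin (d + 1)) :=
  (finRotate (d + 1)).trans j.cycleRange.symm

@[simp]
theorem succAboveSnocPerm_castSucc {d : ℕ} (j : Fin (d + 1)) (i : Fin d) :
    succAboveSnocPerm j i.castSucc = j.succAbove i := by
  simp [succAboveSnocPerm, Fin.coeSucc_eq_succ]

def precompPerm {ι : Type*} (σ : Equiv.Perm ι) :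
    {m : ι → ℕ // ∀ k, 0 < m k} ≃ {m : ι → ℕ // ∀ k, 0 < m k} where
  toFun m := ⟨m.1 ∘ σ, fun k => m.2 (σ k)⟩
  invFun m := ⟨m.1 ∘ σ.symm, fun k => m.2 (σ.symm k)⟩
  left_inv m := by ext; simp
  right_inv m := by ext; simp

@[simp]
theorem precompPerm_apply_coe {ι : Type*} (σ : Equiv.Perm ι) (m : {m : ι → ℕ // ∀ k, 0 < m k}) :
    (precompPerm σ m).1 = m.1 ∘ σ := rfl

theorem MTterm_eq_sum_mul_Tlterm {d : ℕ} {s' : Fin (d + 1) → ℕ} (hs' : ∀ j, 0 < s' j) (s : ℕ)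
    (m : {m : Fin (d + 1) → ℕ // ∀ j, 0 < m j}) :
    MTterm (d + 1) s' s m =
      ∑ j : Fin (d + 1), ∑ a : (∀ i : Fin d, Fin (s' (j.succAbove i))),
        ((Nat.factorial (s' j + (∑ i : Fin d, (a i : ℕ)) - 1) : ℝ) /
            ((Nat.factorial (s' j - 1) * ∏ i : Fin d, Nat.factorial (a i) : ℕ) : ℝ)) *
          Tlterm (d + 1) d
            (Fin.snoc (fun i : Fin d => s' (j.succAbove i) - (a i : ℕ))
              (s + s' j + ∑ i : Fin d, (a i : ℕ))) (precompPerm (succAboveSnocPerm j) m) := by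
  obtain ⟨t, rfl⟩ : ∃ t : Fin (d + 1) → ℕ, s' = fun k => t k + 1 :=
    ⟨fun k => s' k - 1, funext fun k => (Nat.sub_add_cancel (hs' k)).symm⟩
  beta_reduce
  set x : Fin (d + 1) → ℝ := fun k => (m.1 k : ℝ)
  have hx : ∀ k, x k ≠ 0 := fun k => Nat.cast_ne_zero.2 (m.2 k).ne'
  have hX : ∑ k, x k ≠ 0 :=
    (sum_pos (fun k _ => Nat.cast_pos.2 (m.2 k)) univ_nonempty).ne'
  have hMT : MTterm (d + 1) (fun k => t k + 1) s m =
      (∏ k, x k ^ (t k + 1))⁻¹ * ((∑ k, x k) ^ s)⁻¹ := by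
    simp [MTterm, x, mul_comm]
  rw [hMT, inv_prod_pow_succ_eq_sum x hx hX t, sum_Iic_sum_filter_eq_sum_insertNth, sum_mul]
  refine sum_congr rfl fun j _ => ?_
  rw [sum_mul]
  refine sum_congr rfl fun a _ => ?_
  set c : Fin (d + 1) → ℕ := Fin.insertNth j (t j) fun i => (a i : ℕ)
  have hsum : ∑ k, c k = t j + ∑ i, (a i : ℕ) := by
    simp [c, Fin.sum_univ_succAbove _ j]
  have hprod : ∏ k, x k ^ (t k + 1 - c k) =
      x j * ∏ i, x (j.succAbove i) ^ (t (j.succAbove i) + 1 - a i) := by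
    simp [c, Fin.prod_univ_succAbove _ j]
  have hperm : ∑ k, m.1 (succAboveSnocPerm j k) = ∑ k, m.1 k :=
    Equiv.sum_comp (succAboveSnocPerm j) _
  rw [Tlterm_snoc, Nat.cast_multinomial_insertNth, hsum, hprod, precompPerm_apply_coe,
    Function.comp_def, hperm, Nat.add_sub_cancel,
    show t j + 1 + ∑ i, (a i : ℕ) - 1 = t j + ∑ i, (a i : ℕ) by omega]
  simp only [succAboveSnocPerm_castSucc, prod_inv_distrib, Nat.cast_sum, x] at hx ⊢
  field_simp [hx j]
  ring

theorem mt_first_reduction_general (d : ℕ) (s' : Fin (d + 1) → ℕ) (s : ℕ)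
    (hs' : ∀ j, 0 < s' j)
    (hTl : ∀ (j : Fin (d + 1)) (a : ∀ i : Fin d, Fin (s' (j.succAbove i))),
      Summable (Tlterm (d + 1) d
        (Fin.snoc (fun i : Fin d => s' (j.succAbove i) - (a i : ℕ))
          (s + s' j + ∑ i : Fin d, (a i : ℕ))))) :
    MT (d + 1) s' s =
      ∑ j : Fin (d + 1), ∑ a : (∀ i : Fin d, Fin (s' (j.succAbove i))),
        ((Nat.factorial (s' j + (∑ i : Fin d, (a i : ℕ)) - 1) : ℝ) /
            ((Nat.factorial (s' j - 1) * ∏ i : Fin d, Nat.factorial (a i) : ℕ) : ℝ)) *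
          Tl (d + 1) d
            (Fin.snoc (fun i : Fin d => s' (j.succAbove i) - (a i : ℕ))
              (s + s' j + ∑ i : Fin d, (a i : ℕ))) := by
  have hsummable : ∀ (j : Fin (d + 1)) (a : ∀ i : Fin d, Fin (s' (j.succAbove i))),
      Summable fun m => Tlterm (d + 1) d
      (Fin.snoc (fun i : Fin d => s' (j.succAbove i) - (a i : ℕ))
        (s + s' j + ∑ i : Fin d, (a i : ℕ))) (precompPerm (succAboveSnocPerm j) m) :=
    fun j a => (hTl j a).comp_injective (precompPerm (succAboveSnocPerm j)).injective
  rw [MT, tsum_congr (MTterm_eq_sum_mul_Tlterm hs' s),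
    Summable.tsum_finsetSum fun j _ => summable_sum fun a _ => (hsummable j a).mul_left _]
  refine sum_congr rfl fun j _ => ?_
  rw [Summable.tsum_finsetSum fun a _ => (hsummable j a).mul_left _]
  refine sum_congr rfl fun a _ => ?_
  rw [tsum_mul_left, Tl, (precompPerm _).tsum_eq]

/-- **Step (7): first reduction of a Mordell–Tornheim value.**
For positive integers `s_1, …, s_r, s` (depth `r = d + 1 ≥ 1`) such that all the relevant
series converge absolutely,
`T(s_1, …, s_r; s) = ∑_{j=1}^{r} ∑_{(a_k)_{k≠j}, 0 ≤ a_k ≤ s_k - 1}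
   M_j · T_{r-1}(…, s_k - a_k, …, s + s_j + A_j)`,
where the arguments `s_k - a_k` run over `k ≠ j` in order (realized via `Fin.succAbove`
and `Fin.snoc`), `A_j = ∑_{k≠j} a_k` and
`M_j = (s_j + A_j - 1)!/((s_j - 1)! ∏_{k≠j} a_k!)`. -/
theorem mt_first_reduction (d : ℕ) (s' : Fin (d + 1) → ℕ) (s : ℕ)
    (hs' : ∀ j, 0 < s' j) (hs : 0 < s)
    (hT : Summable (MTterm (d + 1) s' s))
    (hTl : ∀ (j : Fin (d + 1)) (a : ∀ i : Fin d, Fin (s' (j.succAbove i))),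
      Summable (Tlterm (d + 1) d
        (Fin.snoc (fun i : Fin d => s' (j.succAbove i) - (a i : ℕ))
          (s + s' j + ∑ i : Fin d, (a i : ℕ))))) :
    MT (d + 1) s' s =
      ∑ j : Fin (d + 1), ∑ a : (∀ i : Fin d, Fin (s' (j.succAbove i))),
        ((Nat.factorial (s' j + (∑ i : Fin d, (a i : ℕ)) - 1) : ℝ) /
            ((Nat.factorial (s' j - 1) * ∏ i : Fin d, Nat.factorial (a i) : ℕ) : ℝ)) *
          Tl (d + 1) d
            (Fin.snoc (fun i : Fin d => s' (j.succAbove i) - (a i : ℕ))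
              (s + s' j + ∑ i : Fin d, (a i : ℕ))) :=
  mt_first_reduction_general d s' s hs' hTl
end

section
/- Let r ≥ 2 and let s_1, ..., s_r be integers with s_j ≥ 2 for each j. Then ∏_{j=1}^r ζ(s_j) = ∑_{j=1}^r ∑_{(a_k)_{k≠j}, 0 ≤ a_k ≤ s_k − 1} M_j · T_{r−1}(s_1 − a_1, ..., ŝ_j, ..., s_r − a_r, s_j + A_j), where ζ denotes the Riemann zeta function, the hat denotes omission of the j-th entry, A_j := ∑_{k≠j} a_k, and M_j := (s_j + A_j − 1)! / ((s_j − 1)! · ∏_{k≠j} a_k!). -/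
/-!
Put `X = ∑ x_k` and `p_k = x_k / X`. A walk on `ℕ^r` starting at `0` that steps in direction `k`
with probability `p_k` leaves the box `∏ [0, s_k)` after at most `∑ s_k` steps; it leaves through
the face `b_j = s_j - 1` in direction `j`, from the point `b`, with probability
`multinomial(b) p_j ∏ p_k^(b_k)`. Multiplying `∏ x_k^(-s_k)` by the total exit probability `1`
expands it as `∑_j ∑_b M_j ∏_{k ≠ j} x_k^(-(s_k - a_k)) X^(-(s_j + A_j))`, where `a_k = b_k`.
Putting `x_k = m_k` and summing over `m ∈ ℕ+^r` turns the `(j, b)` term into `M_j T_{r-1}(…)`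
once `m_j` is moved to the last place.

Algebraically, the exit probabilities add up to `1` because the mass
`Λ = ∑_{b in the box} multinomial(b) p^b` satisfies `Λ = ∑_j Λ p_j = (exit mass) + (Λ - 1)`
by Pascal's rule for multinomial coefficients.
-/

/-- The Riemann zeta value `ζ(s) = ∑_{n=1}^∞ n^{-s}` for a natural number exponent. -/
noncomputable def zetaVal (s : ℕ) : ℝ :=
  ∑' n : ℕ, 1 / ((n : ℝ) + 1) ^ s

open Finset Function

section FirstExit

variable {ι : Type*} [Fintype ι] [DecidableEq ι]

lemma Nat.sum_mul_multinomial_update_pred (c : ι → ℕ) {j : ι} (hj : c j ≠ 0) :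
    (∑ k, c k) * Nat.multinomial univ (update c j (c j - 1)) = c j * Nat.multinomial univ c := by
  obtain ⟨v, hv⟩ := Nat.exists_eq_add_one.mpr (Nat.pos_of_ne_zero hj)
  have hsum : ∑ k, c k = c j + ∑ k ∈ univ.erase j, c k := (add_sum_erase _ _ (mem_univ j)).symm
  have herase : ∀ k ∈ univ.erase j, update c j (c j - 1) k = c k :=
    fun k hk => update_of_ne (ne_of_mem_erase hk) _ _
  rw [← insert_erase (mem_univ j), Nat.multinomial_insert (notMem_erase j _),
    Nat.multinomial_insert (notMem_erase j _), sum_congr rfl herase,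
    Nat.multinomial_congr herase, update_self, insert_erase (mem_univ j), hsum, hv,
    Nat.add_sub_cancel]
  set R := ∑ k ∈ univ.erase j, c k
  have := Nat.add_one_mul_choose_eq (v + R) v
  rw [show v + 1 + R = v + R + 1 by ring, ← mul_assoc, this]
  ring

lemma Nat.multinomial_eq_sum_multinomial_update_pred (c : ι → ℕ) (hc : c ≠ 0) :
    Nat.multinomial univ c = ∑ j with c j ≠ 0, Nat.multinomial univ (update c j (c j - 1)) := by
  have hpos : 0 < ∑ k, c k := by
    obtain ⟨j, hj⟩ := Function.ne_iff.mp hc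
    exact lt_of_lt_of_le (Nat.pos_of_ne_zero hj) (single_le_sum (by simp) (mem_univ j))
  apply Nat.eq_of_mul_eq_mul_left hpos
  rw [mul_sum,
    sum_congr rfl fun j hj => Nat.sum_mul_multinomial_update_pred c (mem_filter.mp hj).2,
    ← sum_mul, sum_filter_ne_zero]

def pointsBelow (s : ι → ℕ) : Finset (ι → ℕ) := Fintype.piFinset fun k => range (s k)

@[simp] lemma mem_pointsBelow {s b : ι → ℕ} : b ∈ pointsBelow s ↔ ∀ k, b k < s k := by
  simp [pointsBelow]

lemma prod_pow_update_succ {R : Type*} [CommMonoid R] (p : ι → R) (b : ι → ℕ) (j : ι) :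
    ∏ k, p k ^ update b j (b j + 1) k = (∏ k, p k ^ b k) * p j := by
  simp_rw [apply_update (fun k e => p k ^ e), prod_update_of_mem (mem_univ j),
    ← mul_prod_erase univ (fun k => p k ^ b k) (mem_univ j), sdiff_singleton_eq_erase, pow_succ,
    mul_right_comm]

variable {R : Type*} [CommRing R]

lemma sum_pointsBelow_mul_eq_sum_exit_add (s : ι → ℕ) (p : ι → R) (j : ι) :
    (∑ b ∈ pointsBelow s, (Nat.multinomial univ b : R) * ∏ k, p k ^ b k) * p j =
      ∑ b ∈ pointsBelow s with b j + 1 = s j, (Nat.multinomial univ b : R) * p j * ∏ k, p k ^ b k +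
      ∑ c ∈ pointsBelow s with c j ≠ 0,
        (Nat.multinomial univ (update c j (c j - 1)) : R) * ∏ k, p k ^ c k := by
  rw [sum_mul, ← sum_filter_add_sum_filter_not _ (fun b => b j + 1 = s j)]
  congr 1
  · exact sum_congr rfl fun b _ => by ring
  · refine sum_nbij' (fun b => update b j (b j + 1)) (fun c => update c j (c j - 1))
      ?_ ?_ ?_ ?_ ?_
    · intro b hb
      simp only [mem_filter, mem_pointsBelow] at hb ⊢
      have := hb.1 j
      exact ⟨(forall_update_iff b fun k v => v < s k).mpr ⟨by omega, fun k _ => hb.1 k⟩, by simp⟩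
    · intro c hc
      simp only [mem_filter, mem_pointsBelow] at hc ⊢
      have := hc.1 j
      exact ⟨(forall_update_iff c fun k v => v < s k).mpr ⟨by omega, fun k _ => hc.1 k⟩,
        by simp only [update_self]; omega⟩
    · intro b _; simp
    · intro c hc
      simp only [mem_filter] at hc
      simp [Nat.sub_add_cancel (Nat.one_le_iff_ne_zero.mpr hc.2)]
    · intro b _
      simp only [update_idem, update_self, Nat.add_sub_cancel, update_eq_self, prod_pow_update_succ]
      ring

theorem sum_exit_eq_one (s : ι → ℕ) (hs : ∀ k, 0 < s k) (p : ι → R) (hp : ∑ k, p k = 1) :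
    ∑ j, ∑ b ∈ pointsBelow s with b j + 1 = s j, (Nat.multinomial univ b : R) * p j * ∏ k, p k ^ b k
      = 1 := by
  set Λ := ∑ b ∈ pointsBelow s, (Nat.multinomial univ b : R) * ∏ k, p k ^ b k with hΛ
  have hpascal : ∑ j, ∑ c ∈ pointsBelow s with c j ≠ 0,
      (Nat.multinomial univ (update c j (c j - 1)) : R) * ∏ k, p k ^ c k = Λ - 1 := by
    simp_rw [sum_filter]
    rw [sum_comm]
    have hzero : (0 : ι → ℕ) ∈ pointsBelow s := mem_pointsBelow.mpr hs
    have hterm : ∀ c : ι → ℕ, (∑ j, if c j ≠ 0 then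
        (Nat.multinomial univ (update c j (c j - 1)) : R) * ∏ k, p k ^ c k else 0) =
        (Nat.multinomial univ c : R) * ∏ k, p k ^ c k - if c = 0 then 1 else 0 := by
      intro c
      rcases eq_or_ne c 0 with rfl | hc
      · simp [Nat.multinomial]
      · rw [← sum_filter, ← sum_mul, ← Nat.cast_sum,
          ← Nat.multinomial_eq_sum_multinomial_update_pred c hc, if_neg hc, sub_zero]
    rw [sum_congr rfl fun c _ => hterm c, sum_sub_distrib, sum_ite_eq' _ _ _, if_pos hzero]
  have := sum_congr rfl fun j (_ : j ∈ univ) => sum_pointsBelow_mul_eq_sum_exit_add s p j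
  rw [← mul_sum, hp, mul_one, sum_add_distrib, hpascal, ← hΛ] at this
  linear_combination -this

end FirstExit

lemma sum_exit_eq_sum_insertNth {M : Type*} [AddCommMonoid M] {n : ℕ} (s : Fin (n + 1) → ℕ)
    (j : Fin (n + 1)) (hj : 0 < s j) (F : (Fin (n + 1) → ℕ) → M) :
    ∑ b ∈ pointsBelow s with b j + 1 = s j, F b =
      ∑ a : ∀ i, Fin (s (j.succAbove i)), F (j.insertNth (s j - 1) fun i => a i) := by
  symm
  refine sum_bij' (fun a _ => j.insertNth (s j - 1) fun i => a i)
    (fun b hb => fun i => ⟨b (j.succAbove i), (mem_pointsBelow.mp (mem_filter.mp hb).1) _⟩)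
    (fun a _ => ?_) (fun _ _ => mem_univ _) (fun a _ => ?_) (fun b hb => ?_) (fun _ _ => rfl)
  · simp only [mem_filter, mem_pointsBelow, Fin.forall_iff_succAbove j, Fin.insertNth_apply_same,
      Fin.insertNth_apply_succAbove]
    exact ⟨⟨by omega, fun i => (a i).isLt⟩, by omega⟩
  · ext i; simp
  · have hbj : b j = s j - 1 := by have := (mem_filter.mp hb).2; omega
    rw [← hbj]; exact Fin.insertNth_self_removeNth j b

lemma one_div_pow_mul_div_pow {K : Type*} [Field K] {x : K} (X : K) (hx : x ≠ 0) {a s : ℕ}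
    (h : a ≤ s) : 1 / x ^ s * (x / X) ^ a = 1 / x ^ (s - a) * (1 / X ^ a) := by
  obtain ⟨t, rfl⟩ := Nat.exists_eq_add_of_le h
  rw [Nat.add_sub_cancel_left, div_pow, pow_add]
  field_simp

lemma one_div_prod_pow_mul_weight_insertNth {K : Type*} [Field K] [CharZero K] {n : ℕ}
    (s : Fin (n + 1) → ℕ) (x : Fin (n + 1) → K) (hx : ∀ k, x k ≠ 0) (X : K) (j : Fin (n + 1))
    (hj : 0 < s j) (a : ∀ i, Fin (s (j.succAbove i))) :
    (∏ k, 1 / x k ^ s k) * ((Nat.multinomial univ (j.insertNth (s j - 1) fun i => a i) : K) *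
        (x j / X) * ∏ k, (x k / X) ^ j.insertNth (α := fun _ => ℕ) (s j - 1) (fun i => a i) k) =
      ((Nat.factorial (s j + (∑ i, (a i : ℕ)) - 1) : K) /
          ((Nat.factorial (s j - 1) * ∏ i, Nat.factorial (a i) : ℕ) : K)) *
        ((∏ i, 1 / x (j.succAbove i) ^ (s (j.succAbove i) - a i)) *
          (1 / X ^ (s j + ∑ i, (a i : ℕ)))) := by
  set b : Fin (n + 1) → ℕ := j.insertNth (s j - 1) fun i => a i
  have hbj : b j = s j - 1 := Fin.insertNth_apply_same _ _ _
  have hbi : ∀ i, b (j.succAbove i) = a i := Fin.insertNth_apply_succAbove _ _ _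
  have hcoef : (Nat.multinomial univ b : K) =
      (Nat.factorial (s j + (∑ i, (a i : ℕ)) - 1) : K) /
        ((Nat.factorial (s j - 1) * ∏ i, Nat.factorial (a i) : ℕ) : K) := by
    have hspec := Nat.multinomial_spec univ b
    rw [Fin.prod_univ_succAbove _ j, Fin.sum_univ_succAbove _ j, hbj] at hspec
    simp only [hbi] at hspec
    rw [show s j + ∑ i, (a i : ℕ) - 1 = s j - 1 + ∑ i, (a i : ℕ) by omega,
      eq_div_iff (Nat.cast_ne_zero.mpr (by positivity)), ← hspec]
    push_cast
    ring
  have hpow : (∏ k, 1 / x k ^ s k) * (x j / X * ∏ k, (x k / X) ^ b k) =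
      (∏ i, 1 / x (j.succAbove i) ^ (s (j.succAbove i) - a i)) *
        (1 / X ^ (s j + ∑ i, (a i : ℕ))) := by
    calc _ = 1 / x j ^ s j * (x j / X) ^ s j * ∏ i,
          (1 / x (j.succAbove i) ^ s (j.succAbove i) * (x (j.succAbove i) / X) ^ (a i : ℕ)) := by
          rw [Fin.prod_univ_succAbove _ j, Fin.prod_univ_succAbove (fun k => (x k / X) ^ b k) j,
            hbj, prod_mul_distrib, ← Nat.sub_add_cancel hj, pow_succ]
          simp only [hbi, Nat.add_sub_cancel]
          ring
      _ = 1 / X ^ s j * ∏ i, (1 / x (j.succAbove i) ^ (s (j.succAbove i) - a i) *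
            (1 / X) ^ (a i : ℕ)) := by
          rw [one_div_pow_mul_div_pow X (hx j) le_rfl, Nat.sub_self, pow_zero, div_one, one_mul]
          refine congrArg _ (prod_congr rfl fun i _ => ?_)
          rw [one_div_pow_mul_div_pow X (hx _) (a i).isLt.le, one_div_pow]
      _ = _ := by
          rw [prod_mul_distrib, prod_pow_eq_pow_sum, one_div_pow, pow_add]
          ring
  rw [← hcoef, ← hpow]
  ring

theorem one_div_prod_pow_eq_sum {K : Type*} [Field K] [CharZero K] {n : ℕ}
    (s : Fin (n + 1) → ℕ) (hs : ∀ k, 0 < s k) (x : Fin (n + 1) → K) (hx : ∀ k, x k ≠ 0)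
    (hX : ∑ k, x k ≠ 0) :
    ∏ k, 1 / x k ^ s k =
      ∑ j, ∑ a : ∀ i, Fin (s (j.succAbove i)),
        ((Nat.factorial (s j + (∑ i, (a i : ℕ)) - 1) : K) /
            ((Nat.factorial (s j - 1) * ∏ i, Nat.factorial (a i) : ℕ) : K)) *
          ((∏ i, 1 / x (j.succAbove i) ^ (s (j.succAbove i) - a i)) *
            (1 / (∑ k, x k) ^ (s j + ∑ i, (a i : ℕ)))) := by
  have hp : ∑ k, x k / ∑ k, x k = 1 := by rw [← sum_div, div_self hX]
  calc ∏ k, 1 / x k ^ s k = (∏ k, 1 / x k ^ s k) * ∑ j, ∑ b ∈ pointsBelow s with b j + 1 = s j,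
        (Nat.multinomial univ b : K) * (x j / ∑ k, x k) * ∏ k, (x k / ∑ k, x k) ^ b k := by
        rw [sum_exit_eq_one s hs _ hp, mul_one]
    _ = _ := by
      simp_rw [mul_sum, sum_exit_eq_sum_insertNth s _ (hs _),
        one_div_prod_pow_mul_weight_insertNth s x hx _ _ (hs _)]

lemma hasSum_prod_pi {β : Type*} {n : ℕ} {f : Fin n → β → ℝ} (hf : ∀ k, Summable (f k))
    (hf0 : ∀ k b, 0 ≤ f k b) :
    HasSum (fun g : Fin n → β => ∏ k, f k (g k)) (∏ k, ∑' b, f k b) := by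
  induction n with
  | zero => simp [hasSum_unique]
  | succ n ih =>
    have ih' := ih (fun k => hf k.succ) (fun k => hf0 k.succ)
    have hprod : (0 : (Fin n → β) → ℝ) ≤ fun g => ∏ k, f k.succ (g k) :=
      fun g => prod_nonneg fun k _ => hf0 k.succ (g k)
    have hsum := (hf 0).mul_of_nonneg ih'.summable (hf0 0) hprod
    have hmul := HasSum.mul (hf 0).hasSum ih' hsum
    rw [Fin.prod_univ_succ, ← (Fin.consEquiv fun _ => β).hasSum_iff]
    simpa [Function.comp_def, Fin.prod_univ_succ] using hmul

lemma Summable.of_finsetSum_of_nonneg {α ι : Type*} {f : ι → α → ℝ} {s : Finset ι}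
    (hf : Summable fun x => ∑ i ∈ s, f i x) (hf0 : ∀ i ∈ s, ∀ x, 0 ≤ f i x) {i : ι}
    (hi : i ∈ s) : Summable (f i) :=
  .of_nonneg_of_le (hf0 i hi) (fun x => single_le_sum (fun j hj => hf0 j hj x) hi) hf

lemma tsum_finsetSum_of_nonneg {α ι : Type*} {f : ι → α → ℝ} {s : Finset ι}
    (hf : Summable fun x => ∑ i ∈ s, f i x) (hf0 : ∀ i ∈ s, ∀ x, 0 ≤ f i x) :
    ∑' x, ∑ i ∈ s, f i x = ∑ i ∈ s, ∑' x, f i x :=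
  Summable.tsum_finsetSum fun _ hi => hf.of_finsetSum_of_nonneg hf0 hi

lemma tsum_sum_sum_of_nonneg {α ι : Type*} {κ : ι → Type*} [Fintype ι] [∀ i, Fintype (κ i)]
    {f : ∀ i, κ i → α → ℝ} (hf0 : ∀ i k x, 0 ≤ f i k x)
    (hf : Summable fun x => ∑ i, ∑ k, f i k x) :
    ∑' x, ∑ i, ∑ k, f i k x = ∑ i, ∑ k, ∑' x, f i k x := by
  have hf0' : ∀ i ∈ univ, ∀ x, 0 ≤ ∑ k, f i k x := fun i _ x => sum_nonneg fun k _ => hf0 i k x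
  rw [tsum_finsetSum_of_nonneg hf hf0']
  exact sum_congr rfl fun i hi =>
    tsum_finsetSum_of_nonneg (hf.of_finsetSum_of_nonneg hf0' hi) fun k _ x => hf0 i k x

lemma zetaVal_eq_tsum_pnat (s : ℕ) : zetaVal s = ∑' n : ℕ+, 1 / ((n : ℕ) : ℝ) ^ s := by
  rw [zetaVal, tsum_pnat_eq_tsum_succ (f := fun n : ℕ => 1 / (n : ℝ) ^ s)]
  push_cast
  rfl

lemma summable_one_div_pnat_pow {s : ℕ} (hs : 2 ≤ s) :
    Summable fun n : ℕ+ => 1 / ((n : ℕ) : ℝ) ^ s :=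
  (Real.summable_one_div_nat_pow.mpr hs).subtype _

def Fin.moveToLast {n : ℕ} (j : Fin (n + 1)) : Equiv.Perm (Fin (n + 1)) :=
  finSuccEquivLast.trans (finSuccEquiv' j).symm

def posTupleEquiv {n : ℕ} (σ : Equiv.Perm (Fin n)) :
    (Fin n → ℕ+) ≃ {m : Fin n → ℕ // ∀ k, 0 < m k} :=
  (σ.symm.arrowCongr (Equiv.refl ℕ+)).trans Equiv.subtypePiEquivPi.symm

lemma posTupleEquiv_apply {n : ℕ} (σ : Equiv.Perm (Fin n)) (m : Fin n → ℕ+) (k : Fin n) :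
    (posTupleEquiv σ m).1 k = m (σ k) := rfl

lemma Fin.moveToLast_castSucc {n : ℕ} (j : Fin (n + 1)) (i : Fin n) :
    j.moveToLast i.castSucc = j.succAbove i := by
  simp [Fin.moveToLast]

lemma Tlterm_last {n : ℕ} (t : Fin (n + 1) → ℕ) (m : {m : Fin (n + 1) → ℕ // ∀ j, 0 < m j}) :
    Tlterm (n + 1) n t m =
      (∏ i : Fin n, 1 / ((m.1 i.castSucc : ℝ) ^ t i.castSucc)) *
        (1 / (∑ k, (m.1 k : ℝ)) ^ t (Fin.last n)) := by
  rw [Tlterm, Fin.prod_univ_castSucc, filter_true_of_mem fun k _ => Fin.le_last k]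
  simp

lemma Tl_snoc_eq_tsum {n : ℕ} (j : Fin (n + 1)) (u : Fin n → ℕ) (e : ℕ) :
    Tl (n + 1) n (Fin.snoc u e) = ∑' m : Fin (n + 1) → ℕ+,
      (∏ i, 1 / ((m (j.succAbove i) : ℕ) : ℝ) ^ u i) * (1 / (∑ k, ((m k : ℕ) : ℝ)) ^ e) := by
  rw [Tl, ← (posTupleEquiv j.moveToLast).tsum_eq]
  refine tsum_congr fun m => ?_
  rw [Tlterm_last]
  simp only [posTupleEquiv_apply, Fin.moveToLast_castSucc, Fin.snoc_castSucc, Fin.snoc_last]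
  rw [Equiv.sum_comp j.moveToLast (fun k => ((m k : ℕ) : ℝ))]

/-- **Corollary (decomposition of a product of zeta values).**
Let `r ≥ 2` (here `r = d + 2`) and let `s_1, …, s_r` be integers with `s_j ≥ 2`.  Then
`∏_{j=1}^{r} ζ(s_j) = ∑_{j=1}^{r} ∑_{(a_k)_{k≠j}, 0 ≤ a_k ≤ s_k - 1}
   M_j · T_{r-1}(…, s_k - a_k, …, s_j + A_j)`,
where the arguments `s_k - a_k` run over `k ≠ j` in order (realized via
`Fin.succAbove` and `Fin.snoc`), `A_j = ∑_{k≠j} a_k` and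
`M_j = (s_j + A_j - 1)!/((s_j - 1)! ∏_{k≠j} a_k!)`. -/
theorem zeta_product_decomposition (d : ℕ) (s' : Fin (d + 2) → ℕ)
    (hs' : ∀ j, 2 ≤ s' j) :
    (∏ j, zetaVal (s' j)) =
      ∑ j : Fin (d + 2), ∑ a : (∀ i : Fin (d + 1), Fin (s' (j.succAbove i))),
        ((Nat.factorial (s' j + (∑ i : Fin (d + 1), (a i : ℕ)) - 1) : ℝ) /
            ((Nat.factorial (s' j - 1) *
              ∏ i : Fin (d + 1), Nat.factorial (a i) : ℕ) : ℝ)) *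
          Tl (d + 2) (d + 1)
            (Fin.snoc (fun i : Fin (d + 1) => s' (j.succAbove i) - (a i : ℕ))
              (s' j + ∑ i : Fin (d + 1), (a i : ℕ))) := by
  have hs : ∀ k, 0 < s' k := fun k => by have := hs' k; omega
  have hprod := hasSum_prod_pi (fun k => summable_one_div_pnat_pow (hs' k))
    (fun k n => by positivity)
  simp_rw [← zetaVal_eq_tsum_pnat] at hprod
  have hexpand := fun m : Fin (d + 2) → ℕ+ =>
    one_div_prod_pow_eq_sum s' hs (fun k => ((m k : ℕ) : ℝ)) (fun k => by positivity)
      (by positivity)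
  rw [← hprod.tsum_eq, tsum_congr hexpand,
    tsum_sum_sum_of_nonneg (fun _ _ _ => by positivity) (hprod.summable.congr hexpand)]
  refine sum_congr rfl fun j _ => sum_congr rfl fun a _ => ?_
  rw [tsum_mul_left, Tl_snoc_eq_tsum j]
end

section
/- For any positive integers r and s, the Mordell–Tornheim value with all first r arguments equal to 1 satisfies T(1, 1, ..., 1; s) = r! · ζ(s + 1, 1, ..., 1), where there are r ones among the arguments of T and r − 1 ones following s + 1 in the multiple zeta value. -/
/-!
The partial-fraction identity `∑_σ ∏_k 1/(x_{σ k} + ⋯ + x_{σ r}) = 1/(x_1 ⋯ x_r)`, summed over the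
permutations σ of `{1, …, r}`, splits each term of `T(1, …, 1; s)` into `r!` pieces. For a fixed σ
the tail sums `n_k = m_{σ k} + ⋯ + m_{σ r}` run bijectively over the strictly decreasing positive
tuples, with `n_1 = m_1 + ⋯ + m_r`, so each σ contributes exactly `ζ(s + 1, 1, …, 1)`. The
rearrangement is done in `ℝ≥0∞`, where it needs no summability.
-/

open Finset Equiv
open scoped ENNReal

section TailSum

variable {M : Type*} {n : ℕ}

section AddCommMonoid

variable [AddCommMonoid M]

def tailSum (m : Fin n → M) (k : Fin n) : M := ∑ l ∈ Ici k, m l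

lemma tailSum_zero (m : Fin (n + 1) → M) : tailSum m 0 = ∑ j, m j := by
  rw [tailSum, ← bot_eq_zero, Ici_bot]

lemma tailSum_last (m : Fin (n + 1) → M) : tailSum m (Fin.last n) = m (Fin.last n) := by
  rw [tailSum, ← Fin.top_eq_last, Ici_top, sum_singleton]

lemma tailSum_succ (m : Fin (n + 1) → M) (k : Fin n) :
    tailSum m k.succ = tailSum (fun j => m j.succ) k := by
  rw [tailSum, ← Fin.map_succEmb_Ici, sum_map]
  rfl

lemma tailSum_castSucc (m : Fin (n + 1) → M) (k : Fin n) :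
    tailSum m k.castSucc = m k.castSucc + tailSum m k.succ := by
  have hIoi : Ioi k.castSucc = Ici k.succ := by
    ext l
    simp [Fin.castSucc_lt_iff_succ_le]
  rw [tailSum, Ici_eq_cons_Ioi, sum_cons, hIoi, tailSum]

end AddCommMonoid

lemma tailSum_injective [AddCancelCommMonoid M] :
    Function.Injective (tailSum : (Fin (n + 1) → M) → Fin (n + 1) → M) := by
  intro m m' h
  funext j
  induction j using Fin.lastCases with
  | last => simpa only [tailSum_last] using congrFun h (Fin.last n)
  | cast i =>
    have hi := congrFun h i.castSucc
    rw [tailSum_castSucc, tailSum_castSucc, congrFun h i.succ] at hi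
    exact add_right_cancel hi

variable [AddCommMonoid M] [PartialOrder M] [IsOrderedCancelAddMonoid M] {m : Fin n → M}

lemma tailSum_pos (hm : ∀ j, 0 < m j) (k : Fin n) : 0 < tailSum m k :=
  sum_pos (fun j _ => hm j) nonempty_Ici

lemma tailSum_strictAnti (hm : ∀ j, 0 < m j) : StrictAnti (tailSum m) := fun i j hij =>
  sum_lt_sum_of_subset (Ici_subset_Ici.2 hij.le) (mem_Ici.2 le_rfl) (by simpa using hij) (hm i)
    (fun l _ _ => (hm l).le)

end TailSum

lemma exists_tailSum_eq {r : ℕ} (n : Fin (r + 1) → ℕ) (hpos : 0 < n (Fin.last r))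
    (hanti : StrictAnti n) : ∃ m : Fin (r + 1) → ℕ, (∀ j, 0 < m j) ∧ tailSum m = n := by
  refine ⟨Fin.lastCases (n (Fin.last r)) (fun i => n i.castSucc - n i.succ), fun j => ?_, ?_⟩
  · induction j using Fin.lastCases with
    | last => simpa using hpos
    | cast i => simpa using hanti (Fin.castSucc_lt_succ (i := i))
  · funext j
    induction j using Fin.reverseInduction with
    | last => simp [tailSum_last]
    | cast i ih =>
      rw [tailSum_castSucc, ih, Fin.lastCases_castSucc]
      exact Nat.sub_add_cancel (hanti (Fin.castSucc_lt_succ (i := i))).le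

lemma prod_inv_comp_swap_succ {n : ℕ} (x : Fin (n + 1) → ℝ≥0∞) (i : Fin (n + 1))
    (h0 : x i ≠ 0) (htop : x i ≠ ⊤) :
    ∏ j : Fin n, (x (swap 0 i j.succ))⁻¹ = x i * ∏ l, (x l)⁻¹ := by
  rw [← Equiv.prod_comp (swap 0 i) (fun l => (x l)⁻¹), Fin.prod_univ_succ, swap_apply_left,
    ← mul_assoc, ENNReal.mul_inv_cancel h0 htop, one_mul]

lemma prod_inv_tailSum_comp_perm {n : ℕ} (x : Fin (n + 1) → ℝ≥0∞) (σ : Perm (Fin (n + 1))) :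
    ∏ k, (tailSum (x ∘ σ) k)⁻¹ = (∑ i, x i)⁻¹ * ∏ k, (tailSum (x ∘ σ ∘ Fin.succ) k)⁻¹ := by
  rw [Fin.prod_univ_succ, tailSum_zero, Fintype.sum_equiv σ (x ∘ σ) x fun _ => rfl]
  simp only [tailSum_succ]
  rfl

theorem sum_perm_prod_inv_tailSum {n : ℕ} (x : Fin n → ℝ≥0∞) (h0 : ∀ i, x i ≠ 0)
    (htop : ∀ i, x i ≠ ⊤) : ∑ σ : Perm (Fin n), ∏ k, (tailSum (x ∘ σ) k)⁻¹ = ∏ i, (x i)⁻¹ := by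
  induction n with
  | zero => simp
  | succ n ih =>
    have hsum0 : ∑ i, x i ≠ 0 := by simpa using ⟨0, h0 0⟩
    have hsumtop : ∑ i, x i ≠ ⊤ := ENNReal.sum_ne_top.2 fun i _ => htop i
    -- `Perm.decomposeFin` groups the permutations `σ` by the value `i = σ 0`
    calc ∑ σ : Perm (Fin (n + 1)), ∏ k, (tailSum (x ∘ σ) k)⁻¹
        = (∑ i, x i)⁻¹ * ∑ p : Fin (n + 1) × Perm (Fin n),
            ∏ k, (tailSum (x ∘ Perm.decomposeFin.symm p ∘ Fin.succ) k)⁻¹ := by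
          simp only [prod_inv_tailSum_comp_perm, ← mul_sum]
          rw [← Perm.decomposeFin.symm.sum_comp]
      _ = (∑ i, x i)⁻¹ * ∑ i, ∑ τ : Perm (Fin n),
            ∏ k, (tailSum ((fun j => x (swap 0 i j.succ)) ∘ τ) k)⁻¹ := by
          simp only [Fintype.sum_prod_type, Function.comp_def, Perm.decomposeFin_symm_apply_succ]
      _ = (∑ i, x i)⁻¹ * ∑ i, x i * ∏ l, (x l)⁻¹ := by
          congr 1
          refine sum_congr rfl fun i _ => ?_
          rw [ih _ (fun _ => h0 _) (fun _ => htop _), prod_inv_comp_swap_succ x i (h0 i) (htop i)]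
      _ = ∏ i, (x i)⁻¹ := by
          rw [← sum_mul, ← mul_assoc, ENNReal.inv_mul_cancel hsum0 hsumtop, one_mul]

lemma Nat.cast_tailSum {R : Type*} [AddCommMonoidWithOne R] {n : ℕ} (m : Fin n → ℕ) (k : Fin n) :
    ((tailSum m k : ℕ) : R) = tailSum (fun j => (m j : R)) k :=
  Nat.cast_sum _ _

noncomputable def tailSumEquiv (r : ℕ) :
    {m : Fin (r + 1) → ℕ // ∀ j, 0 < m j} ≃
      {n : Fin (r + 1) → ℕ // (∀ j, 0 < n j) ∧ ∀ i j : Fin (r + 1), i < j → n j < n i} :=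
  Equiv.ofBijective
    (fun m => ⟨tailSum m.1, tailSum_pos m.2, fun _ _ h => tailSum_strictAnti m.2 h⟩)
    ⟨fun _ _ h => Subtype.ext (tailSum_injective (congrArg Subtype.val h)), fun n => by
      obtain ⟨m, hm, h⟩ := exists_tailSum_eq n.1 (n.2.1 _) n.2.2
      exact ⟨⟨m, hm⟩, Subtype.ext h⟩⟩

def posTupleCompPerm {r : ℕ} (σ : Perm (Fin r)) :
    {m : Fin r → ℕ // ∀ j, 0 < m j} ≃ {m : Fin r → ℕ // ∀ j, 0 < m j} where
  toFun m := ⟨m.1 ∘ σ, fun j => m.2 (σ j)⟩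
  invFun m := ⟨m.1 ∘ σ.symm, fun j => m.2 (σ.symm j)⟩
  left_inv m := by ext; simp
  right_inv m := by ext; simp

lemma prod_inv_pow_ite_zero {r : ℕ} (a : Fin (r + 1) → ℝ≥0∞) (s : ℕ) :
    ∏ k, (a k ^ (if (k : ℕ) = 0 then s + 1 else 1))⁻¹ = (a 0 ^ s)⁻¹ * ∏ k, (a k)⁻¹ := by
  simp only [Fin.prod_univ_succ, Fin.val_zero, Fin.val_succ, ↓reduceIte, Nat.succ_ne_zero,
    pow_zero, one_mul, ENNReal.inv_pow, pow_succ, mul_assoc]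

lemma inv_pow_sum_mul_prod_inv_eq_sum_perm {r : ℕ} (m : Fin (r + 1) → ℕ) (hm : ∀ j, 0 < m j)
    (s : ℕ) : ((∑ j, (m j : ℝ≥0∞)) ^ s)⁻¹ * ∏ j, (m j : ℝ≥0∞)⁻¹ =
      ∑ σ : Perm (Fin (r + 1)),
        ∏ k, (((tailSum (m ∘ σ) k : ℕ) : ℝ≥0∞) ^ (if (k : ℕ) = 0 then s + 1 else 1))⁻¹ := by
  have hsum (σ : Perm (Fin (r + 1))) : ∑ j, ((m ∘ σ) j : ℝ≥0∞) = ∑ j, (m j : ℝ≥0∞) :=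
    Equiv.sum_comp σ (fun j => (m j : ℝ≥0∞))
  simp only [prod_inv_pow_ite_zero, Nat.cast_tailSum, tailSum_zero, hsum, ← mul_sum]
  exact congrArg _ (sum_perm_prod_inv_tailSum (fun j => (m j : ℝ≥0∞))
    (fun j => by simpa using (hm j).ne') (fun _ => ENNReal.natCast_ne_top _)).symm

theorem tsum_mt_ones_eq_factorial_mul_tsum_mzv (r s : ℕ) :
    ∑' m : {m : Fin (r + 1) → ℕ // ∀ j, 0 < m j},
        ((∑ j, (m.1 j : ℝ≥0∞)) ^ s)⁻¹ * ∏ j, (m.1 j : ℝ≥0∞)⁻¹ =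
      (r + 1).factorial * ∑' n : {n : Fin (r + 1) → ℕ //
          (∀ j, 0 < n j) ∧ ∀ i j : Fin (r + 1), i < j → n j < n i},
        ∏ k, ((n.1 k : ℝ≥0∞) ^ (if (k : ℕ) = 0 then s + 1 else 1))⁻¹ := by
  set G : {n : Fin (r + 1) → ℕ // (∀ j, 0 < n j) ∧ ∀ i j : Fin (r + 1), i < j → n j < n i} →
    ℝ≥0∞ := fun n => ∏ k, ((n.1 k : ℝ≥0∞) ^ (if (k : ℕ) = 0 then s + 1 else 1))⁻¹
  calc _ = ∑' m, ∑ σ : Perm (Fin (r + 1)), G (tailSumEquiv r (posTupleCompPerm σ m)) :=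
        tsum_congr fun m => inv_pow_sum_mul_prod_inv_eq_sum_perm m.1 m.2 s
    _ = ∑ σ : Perm (Fin (r + 1)), ∑' m, G (tailSumEquiv r (posTupleCompPerm σ m)) :=
        Summable.tsum_finsetSum fun _ _ => ENNReal.summable
    _ = ∑ _σ : Perm (Fin (r + 1)), ∑' n, G n :=
        sum_congr rfl fun σ _ => ((posTupleCompPerm σ).trans (tailSumEquiv r)).tsum_eq G
    _ = _ := by simp [Fintype.card_perm]

lemma MT_ones_succ_eq_toReal (r s : ℕ) :
    MT (r + 1) (fun _ => 1) s = (∑' m : {m : Fin (r + 1) → ℕ // ∀ j, 0 < m j},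
        ((∑ j, (m.1 j : ℝ≥0∞)) ^ s)⁻¹ * ∏ j, (m.1 j : ℝ≥0∞)⁻¹).toReal := by
  have hsum_ne_zero (m : {m : Fin (r + 1) → ℕ // ∀ j, 0 < m j}) : ∑ j, (m.1 j : ℝ≥0∞) ≠ 0 := by
    simpa using ⟨0, (m.2 0).ne'⟩
  rw [ENNReal.tsum_toReal_eq fun m => ENNReal.mul_ne_top
    (ENNReal.inv_ne_top.2 (pow_ne_zero _ (hsum_ne_zero m)))
    (ENNReal.prod_ne_top fun j _ => ENNReal.inv_ne_top.2 (by simpa using (m.2 j).ne'))]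
  refine tsum_congr fun m => ?_
  simp [MTterm, ENNReal.toReal_prod, ← Nat.cast_sum, mul_comm]

lemma MZV_eq_toReal (r : ℕ) (t : Fin r → ℕ) :
    MZV r t = (∑' n : {n : Fin r → ℕ // (∀ j, 0 < n j) ∧ ∀ i j : Fin r, i < j → n j < n i},
        ∏ k, ((n.1 k : ℝ≥0∞) ^ t k)⁻¹).toReal := by
  rw [ENNReal.tsum_toReal_eq fun n => ENNReal.prod_ne_top fun j _ =>
    ENNReal.inv_ne_top.2 (pow_ne_zero _ (by simpa using (n.2.1 j).ne'))]
  refine tsum_congr fun n => ?_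
  simp [MZVterm, ENNReal.toReal_prod]

theorem mt_ones_eq_factorial_mzv_general (r s : ℕ) (hr : 0 < r) :
    MT r (fun _ => 1) s =
      (Nat.factorial r : ℝ) * MZV r (fun i => if (i : ℕ) = 0 then s + 1 else 1) := by
  obtain ⟨r, rfl⟩ := Nat.exists_eq_add_one_of_ne_zero hr.ne'
  rw [MT_ones_succ_eq_toReal, tsum_mt_ones_eq_factorial_mul_tsum_mzv, MZV_eq_toReal,
    ENNReal.toReal_mul, ENNReal.toReal_natCast]

/-- **Corollary (Mordell).** For any positive integers `r` and `s`,
`T(1, 1, …, 1; s) = r! · ζ(s+1, 1, …, 1)`, with `r` ones among the arguments of `T`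
and `r - 1` ones following `s + 1` in the multiple zeta value. -/
theorem mt_ones_eq_factorial_mzv (r s : ℕ) (hr : 0 < r) (hs : 0 < s) :
    MT r (fun _ => 1) s =
      (Nat.factorial r : ℝ) * MZV r (fun i => if (i : ℕ) = 0 then s + 1 else 1) :=
  mt_ones_eq_factorial_mzv_general r s hr
end
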